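/- arXiv:1810.01906 — 7 statements merged into one kernel-verified Lean document; each statement's English description precedes it below -/
import Mathlib

section
/- Let m be a positive integer and let s > 1 be a real number. If (k₁, …, k_m) ∈ Δ(m), i.e., k₁ + 2k₂ + ⋯ + m·k_m = m with each kℓ a nonnegative integer, and k := k₁ + ⋯ + k_m, then (k!)^s · ∏_{ℓ=1}^{m} (ℓ!)^{(s−1)·kℓ} ≤ k! · (m!)^{s−1}, where factorials are raised to real powers. -/
/-!
Listing each part ℓ exactly kℓ times gives k positive integers a₁, …, a_k summing to m.
Since `(a + b)! = C(a + b, b) a! b!` with `C(a + b, b) ≥ b + 1` for `a ≥ 1`, induction on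
the list yields `k! ∏ aᵢ! ≤ (∑ aᵢ)!`, that is `k! ∏ (ℓ!)^{kℓ} ≤ m!`. Raising this to the
power `s - 1 ≥ 0` and multiplying by `k!` gives the claim.
-/

open Nat

theorem Nat.succ_mul_factorial_mul_factorial_le {a : ℕ} (ha : 1 ≤ a) (b : ℕ) :
    (b + 1) * a ! * b ! ≤ (a + b)! := by
  calc (b + 1) * a ! * b ! = (b + 1).choose b * a ! * b ! := by
        rw [Nat.choose_succ_self_right]
    _ ≤ (a + b).choose b * a ! * b ! := by
        grw [Nat.choose_le_choose b (show b + 1 ≤ a + b by omega)]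
    _ = (a + b)! := Nat.add_choose_mul_factorial_mul_factorial a b

theorem Multiset.factorial_card_mul_prod_factorial_le {s : Multiset ℕ}
    (hs : ∀ a ∈ s, 1 ≤ a) : (card s)! * (s.map factorial).prod ≤ s.sum ! := by
  induction s using Multiset.induction_on with
  | empty => simp
  | cons a s ih =>
    have hs' : ∀ b ∈ s, 1 ≤ b := fun b hb => hs b (Multiset.mem_cons_of_mem hb)
    have hcard : card s ≤ s.sum := by simpa using Multiset.card_nsmul_le_sum hs'
    simp only [Multiset.card_cons, Multiset.map_cons, Multiset.prod_cons, Multiset.sum_cons,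
      Nat.factorial_succ]
    calc (card s + 1) * (card s)! * (a ! * (s.map factorial).prod)
        = a ! * ((card s + 1) * ((card s)! * (s.map factorial).prod)) := by ring
      _ ≤ a ! * ((s.sum + 1) * s.sum !) := by gcongr; exact ih hs'
      _ = (s.sum + 1) * a ! * s.sum ! := by ring
      _ ≤ (a + s.sum)! :=
        Nat.succ_mul_factorial_mul_factorial_le (hs a (Multiset.mem_cons_self a s)) _

theorem Finset.factorial_sum_mul_prod_factorial_pow_le {ι : Type*} (t : Finset ι) {a : ι → ℕ}
    (ha : ∀ i ∈ t, 1 ≤ a i) (k : ι → ℕ) :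
    (∑ i ∈ t, k i)! * ∏ i ∈ t, (a i)! ^ k i ≤ (∑ i ∈ t, a i * k i)! := by
  set s : Multiset ℕ := t.val.bind fun i => Multiset.replicate (k i) (a i)
  have hs : ∀ x ∈ s, 1 ≤ x := by
    intro x hx
    obtain ⟨i, hi, hx⟩ := Multiset.mem_bind.1 hx
    rw [Multiset.eq_of_mem_replicate hx]
    exact ha i hi
  have := Multiset.factorial_card_mul_prod_factorial_le hs
  simpa [s, Multiset.card_bind, Multiset.sum_bind, Multiset.map_bind, Multiset.prod_bind,
    Function.comp_def, mul_comm] using this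

theorem Real.rpow_mul_rpow_sub_one_le {x y z s : ℝ} (hx : 0 < x) (hy : 0 ≤ y)
    (hxyz : x * y ≤ z) (hs : 1 ≤ s) : x ^ s * y ^ (s - 1) ≤ x * z ^ (s - 1) := by
  calc x ^ s * y ^ (s - 1) = x * (x * y) ^ (s - 1) := by
        rw [Real.mul_rpow hx.le hy, ← mul_assoc, ← Real.rpow_one_add' hx.le (by linarith),
          add_sub_cancel]
    _ ≤ x * z ^ (s - 1) := by gcongr

theorem stmt_0_general (m : ℕ) (s : ℝ) (hs : 1 < s)
    (kv : Fin m → ℕ) (hΔ : ∑ ℓ : Fin m, (ℓ.1 + 1) * kv ℓ = m) :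
    ((Nat.factorial (∑ ℓ : Fin m, kv ℓ) : ℝ)) ^ s *
      ∏ ℓ : Fin m, ((Nat.factorial (ℓ.1 + 1) : ℝ)) ^ ((s - 1) * (kv ℓ : ℝ)) ≤
    (Nat.factorial (∑ ℓ : Fin m, kv ℓ) : ℝ) * (Nat.factorial m : ℝ) ^ (s - 1) := by
  have hnat : (∑ ℓ, kv ℓ)! * ∏ ℓ : Fin m, (ℓ.1 + 1)! ^ kv ℓ ≤ m ! := by
    simpa [hΔ] using Finset.univ.factorial_sum_mul_prod_factorial_pow_le
      (a := fun ℓ : Fin m => ℓ.1 + 1) (fun ℓ _ => Nat.succ_pos _) kv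
  have hprod : ∏ ℓ : Fin m, ((ℓ.1 + 1)! : ℝ) ^ ((s - 1) * (kv ℓ : ℝ))
      = (∏ ℓ : Fin m, ((ℓ.1 + 1)! : ℝ) ^ kv ℓ) ^ (s - 1) := by
    rw [← Real.finsetProd_rpow _ _ fun ℓ _ => by positivity]
    refine Finset.prod_congr rfl fun ℓ _ => ?_
    rw [mul_comm, Real.rpow_mul (by positivity), Real.rpow_natCast]
  rw [hprod]
  exact Real.rpow_mul_rpow_sub_one_le (by positivity) (by positivity) (by exact_mod_cast hnat)
    hs.le

/-- Lemma 3.2 ("lema_estimativa_produtorio_vzs_fatorial"):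
If `(k₁, …, k_m) ∈ Δ(m)`, i.e. `k₁ + 2k₂ + ⋯ + m·k_m = m`, and `k = k₁ + ⋯ + k_m`, then
`(k!)^s · ∏_{ℓ=1}^m (ℓ!)^{(s-1)kℓ} ≤ k! · (m!)^{s-1}`. -/
theorem stmt_0 (m : ℕ) (hm : 0 < m) (s : ℝ) (hs : 1 < s)
    (kv : Fin m → ℕ) (hΔ : ∑ ℓ : Fin m, (ℓ.1 + 1) * kv ℓ = m) :
    ((Nat.factorial (∑ ℓ : Fin m, kv ℓ) : ℝ)) ^ s *
      ∏ ℓ : Fin m, ((Nat.factorial (ℓ.1 + 1) : ℝ)) ^ ((s - 1) * (kv ℓ : ℝ)) ≤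
    (Nat.factorial (∑ ℓ : Fin m, kv ℓ) : ℝ) * (Nat.factorial m : ℝ) ^ (s - 1) :=
  stmt_0_general m s hs kv hΔ
end

section
/- For every positive integer m and every real number R, one has ∑_{(k₁,…,k_m) ∈ Δ(m)} (k!/(k₁!·k₂!⋯k_m!)) · R^k = R·(1+R)^{m−1}, where k := k₁ + ⋯ + k_m. -/
/-!
By the multinomial theorem, the sum is the coefficient of `X^m` in
`∑_{k ≤ m} (R (X + X² + ⋯ + X^m))^k`. Modulo `X^(m+1)` this polynomial is
`1 / (1 - R X / (1 - X)) = (1 - X) / (1 - (1 + R) X)`, whose coefficient of `X^m` is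
`(1 + R)^m - (1 + R)^(m-1) = R (1 + R)^(m-1)`.
-/

open Polynomial Finset

lemma Nat.cast_multinomial {K ι : Type*} [Semifield K] [CharZero K] (s : Finset ι)
    (f : ι → ℕ) :
    (Nat.multinomial s f : K) = (∑ i ∈ s, f i).factorial / ∏ i ∈ s, ((f i).factorial : K) := by
  rw [Nat.multinomial, Nat.cast_div (prod_factorial_dvd_factorial_sum s f)
    (Nat.cast_ne_zero.2 (prod_factorial_pos s f).ne'), Nat.cast_prod]

section

variable {K : Type*} [CommRing K]

lemma isCoprime_X_one_sub_C_mul_X (c : K) : IsCoprime (X : K[X]) (1 - C c * X) :=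
  ⟨C c, 1, by ring⟩

lemma coeff_geom_sum_C_mul_X (c : K) {m n : ℕ} (hn : n ≤ m) :
    (∑ j ∈ range (m + 1), (C c * X) ^ j).coeff n = c ^ n := by
  simp only [mul_pow, ← C_pow, finsetSum_coeff, coeff_C_mul_X_pow]
  rw [sum_ite_eq, if_pos (mem_range_succ_iff.2 hn)]

theorem coeff_geom_sum_C_mul_sum_X_pow (r : K) {m : ℕ} (hm : 0 < m) :
    (∑ k ∈ range (m + 1), (C r * ∑ i ∈ range m, X ^ (i + 1)) ^ k).coeff m
      = r * (1 + r) ^ (m - 1) := by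
  set G : K[X] := ∑ i ∈ range m, X ^ i
  set T : K[X] := C r * ∑ i ∈ range m, X ^ (i + 1)
  set A := ∑ k ∈ range (m + 1), T ^ k
  set B := ∑ j ∈ range (m + 1), (C (1 + r) * X) ^ j
  have hT : T = X * (C r * G) := by
    simp only [T, G, mul_sum, pow_succ]
    exact sum_congr rfl fun _ _ => by ring
  have hA : (1 - T) * A = 1 - T ^ (m + 1) := mul_neg_geom_sum T (m + 1)
  have hB : (1 - C (1 + r) * X) * B = 1 - (C (1 + r) * X) ^ (m + 1) := mul_neg_geom_sum _ _
  have hG : (1 - X) * G = 1 - X ^ m := mul_neg_geom_sum X m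
  have hc : C (1 + r) = 1 + C r := by rw [C_add, C_1]
  -- `(1 - X) (1 - T) = 1 - (1 + r) X + r X^(m+1)`, so `A ≡ (1 - X) B` modulo `X^(m+1)`.
  have key : (1 - C (1 + r) * X) * (A - (1 - X) * B) = X ^ (m + 1) *
      ((1 - X) * C (1 + r) ^ (m + 1) - C r * A - (1 - X) * (C r * G) ^ (m + 1)) := by
    rw [hT, mul_pow] at hA
    rw [mul_pow] at hB
    linear_combination (1 - X) * hA - (1 - X) * hB + (C r * X * A) * hG - X * A * hc
  have hdvd : X ^ (m + 1) ∣ A - (1 - X) * B :=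
    (isCoprime_X_one_sub_C_mul_X (1 + r)).pow_left.dvd_of_dvd_mul_left ⟨_, key⟩
  obtain ⟨n, rfl⟩ := Nat.exists_eq_add_one_of_ne_zero hm.ne'
  have hAB : A.coeff (n + 1) = ((1 - X) * B).coeff (n + 1) :=
    sub_eq_zero.1 (coeff_sub A _ _ ▸ X_pow_dvd_iff.1 hdvd (n + 1) (n + 1).lt_succ_self)
  rw [hAB, sub_mul, one_mul, coeff_sub, coeff_X_mul, coeff_geom_sum_C_mul_X _ le_rfl,
    coeff_geom_sum_C_mul_X _ n.le_succ, Nat.add_sub_cancel, pow_succ]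
  ring

lemma coeff_pow_C_mul_sum_X_pow {ι : Type*} [DecidableEq ι] (s : Finset ι) (w : ι → ℕ)
    (r : K) (k n : ℕ) : ((C r * ∑ i ∈ s, X ^ w i) ^ k).coeff n
      = ∑ kv ∈ piAntidiag s k with ∑ i ∈ s, w i * kv i = n,
          (Nat.multinomial s kv : K) * r ^ k := by
  rw [mul_pow, ← C_pow, coeff_C_mul, sum_pow_eq_sum_piAntidiag, finsetSum_coeff, sum_filter,
    mul_sum]
  refine sum_congr rfl fun kv _ => ?_
  simp only [← map_natCast C, ← pow_mul, prod_pow_eq_pow_sum, coeff_C_mul_X_pow]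
  split_ifs with h₁ h₂ h₂
  · ring
  · exact absurd h₁.symm h₂
  · exact absurd h₂.symm h₁
  · ring

/-- `Δ(m)`: `kv ℓ` is the number of parts of size `ℓ + 1` in a partition of `m`. -/
def partitionMultiplicities (m : ℕ) : Finset (Fin m → ℕ) :=
  {kv ∈ Fintype.piFinset fun _ => range (m + 1) | ∑ ℓ, (ℓ.1 + 1) * kv ℓ = m}

lemma sum_le_sum_succ_mul {m : ℕ} (kv : Fin m → ℕ) :
    ∑ ℓ, kv ℓ ≤ ∑ ℓ : Fin m, (ℓ.1 + 1) * kv ℓ :=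
  sum_le_sum fun ℓ _ => Nat.le_mul_of_pos_left _ ℓ.1.succ_pos

lemma mem_partitionMultiplicities {m : ℕ} {kv : Fin m → ℕ} :
    kv ∈ partitionMultiplicities m ↔ ∑ ℓ, (ℓ.1 + 1) * kv ℓ = m := by
  simp only [partitionMultiplicities, mem_filter, Fintype.mem_piFinset, mem_range_succ_iff,
    and_iff_right_iff_imp]
  intro h ℓ
  exact (single_le_sum (fun _ _ => Nat.zero_le _) (mem_univ ℓ)).trans
    ((sum_le_sum_succ_mul kv).trans_eq h)

lemma coe_partitionMultiplicities (m : ℕ) :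
    (partitionMultiplicities m : Set (Fin m → ℕ)) = {kv | ∑ ℓ, (ℓ.1 + 1) * kv ℓ = m} :=
  Set.ext fun _ => mem_partitionMultiplicities

lemma sum_partitionMultiplicities (r : K) (m : ℕ) :
    ∑ kv ∈ partitionMultiplicities m, (Nat.multinomial univ kv : K) * r ^ (∑ ℓ, kv ℓ)
      = (∑ k ∈ range (m + 1), (C r * ∑ i ∈ range m, X ^ (i + 1)) ^ k).coeff m := by
  have hmaps : ∀ kv ∈ partitionMultiplicities m, ∑ ℓ, kv ℓ ∈ range (m + 1) := fun kv hkv =>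
    mem_range_succ_iff.2 ((sum_le_sum_succ_mul kv).trans_eq (mem_partitionMultiplicities.1 hkv))
  rw [← sum_fiberwise_of_maps_to hmaps, finsetSum_coeff,
    ← Fin.sum_univ_eq_sum_range (fun i => (X : K[X]) ^ (i + 1))]
  refine sum_congr rfl fun k _ => ?_
  rw [coeff_pow_C_mul_sum_X_pow]
  refine sum_congr ?_ fun kv hkv => ?_
  · ext kv
    simp only [mem_filter, mem_partitionMultiplicities, mem_piAntidiag, mem_univ, implies_true,
      and_true]
    exact and_comm
  · rw [(mem_piAntidiag.1 (mem_filter.1 hkv).1).1]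

end

/-- Lemma 3.3 ("lema_sominha_maluca"):
For every positive integer `m` and every real `R`,
`∑_{(k₁,…,k_m) ∈ Δ(m)} (k!/(k₁!⋯k_m!)) R^k = R(1+R)^{m-1}`, where `k = k₁ + ⋯ + k_m`
and `Δ(m) = {k ∈ ℕ₀^m : k₁ + 2k₂ + ⋯ + m·k_m = m}`. -/
theorem stmt_1 (m : ℕ) (hm : 0 < m) (R : ℝ) :
    ∑ᶠ kv : {kv : Fin m → ℕ // ∑ ℓ : Fin m, (ℓ.1 + 1) * kv ℓ = m},
      ((Nat.factorial (∑ ℓ : Fin m, kv.1 ℓ) : ℝ) /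
        ∏ ℓ : Fin m, (Nat.factorial (kv.1 ℓ) : ℝ)) * R ^ (∑ ℓ : Fin m, kv.1 ℓ)
    = R * (1 + R) ^ (m - 1) := by
  calc _ = ∑ᶠ kv ∈ (partitionMultiplicities m : Set (Fin m → ℕ)),
          (Nat.multinomial univ kv : ℝ) * R ^ (∑ ℓ, kv ℓ : ℕ) := by
        rw [coe_partitionMultiplicities, ← finsum_set_coe_eq_finsum_mem]
        simp only [Nat.cast_multinomial]
        rfl
    _ = ∑ kv ∈ partitionMultiplicities m, (Nat.multinomial univ kv : ℝ) * R ^ (∑ ℓ, kv ℓ) :=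
        finsum_mem_coe_finset _ _
    _ = R * (1 + R) ^ (m - 1) := by
      rw [sum_partitionMultiplicities, coeff_geom_sum_C_mul_sum_X_pow R hm]
end

section
/- Let s > 1 and let g : ℝ → ℂ be a smooth function satisfying Gevrey-s bounds with constants C₀, h₀ > 0 (i.e., |g^{(ℓ)}(t)| ≤ C₀·h₀^ℓ·(ℓ!)^s for all t ∈ ℝ and ℓ ∈ ℕ₀) and such that Re g(t) ≤ 0 for all t ∈ ℝ. Then for every ε > 0 there exists a constant C_ε > 0 such that e^{−ε·ξ^{1/s}} · |dᵐ/dtᵐ (e^{ξ·g(t)})| ≤ C_ε^m · (m!)^s for all t ∈ ℝ, all m ∈ ℕ₀ and all integers ξ ≥ 1. -/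
lemma my_choose_lb : ∀ (m r : ℕ), 1 ≤ r → r ≤ m → m - r + 1 ≤ m.choose r := by
  intro m
  induction m with
  | zero => intro r h1 h2; omega
  | succ m ih =>
    intro r h1 h2
    obtain ⟨k, rfl⟩ := Nat.exists_eq_add_of_le h1
    rw [add_comm 1 k, Nat.choose_succ_succ]
    rcases Nat.lt_or_ge k m with hk | hk
    · have h3 : m - (k+1) + 1 ≤ m.choose (k+1) := ih (k+1) (by omega) (by omega)
      have h4 : 1 ≤ m.choose k := Nat.one_le_iff_ne_zero.mpr (Nat.choose_pos (by omega)).ne'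
      simp only [Nat.succ_eq_add_one]
      omega
    · have : k = m := by omega
      subst this
      simp

lemma my_L1 {s : ℝ} (hs : 1 ≤ s) (m r j : ℕ) (hr : 1 ≤ r) (hrm : r ≤ m)
    (hj1 : 1 ≤ j) (hj : j ≤ m - r + 1) :
    ((m-1).choose (r-1) : ℝ) * ((r.factorial * (m-r).factorial * j : ℕ) : ℝ) ^ s
      ≤ 2 ^ r * (m.factorial : ℝ) ^ s := by
  set X : ℕ := r.factorial * (m-r).factorial * j with hXdef
  have hXm : X ≤ m.factorial := by
    calc X ≤ r.factorial * (m-r).factorial * m.choose r :=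
          Nat.mul_le_mul_left _ (hj.trans (my_choose_lb m r hr hrm))
    _ = m.choose r * r.factorial * (m-r).factorial := by ring
    _ = m.factorial := Nat.choose_mul_factorial_mul_factorial hrm
  have hCX : (m-1).choose (r-1) * X ≤ r * m.factorial := by
    have e1 : (m-1).choose (r-1) * (r-1).factorial * ((m-1)-(r-1)).factorial
        = (m-1).factorial := Nat.choose_mul_factorial_mul_factorial (by omega)
    have e2 : (m-1) - (r-1) = m - r := by omega
    have e3 : r.factorial = r * (r-1).factorial := by
      conv_lhs => rw [show r = (r-1)+1 by omega]
      rw [Nat.factorial_succ]; congr 1; omega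
    have e4 : m.factorial = m * (m-1).factorial := by
      conv_lhs => rw [show m = (m-1)+1 by omega]
      rw [Nat.factorial_succ]; congr 1; omega
    calc (m-1).choose (r-1) * X
        = r * ((m-1).choose (r-1) * (r-1).factorial * ((m-1)-(r-1)).factorial) * j := by
          rw [e2, hXdef, e3]; ring
      _ = r * (m-1).factorial * j := by rw [e1]
      _ ≤ r * (m-1).factorial * m := Nat.mul_le_mul_left _ (by omega)
      _ = r * m.factorial := by rw [e4]; ring
  have hX1 : (1:ℝ) ≤ (X:ℝ) := by
    have : 0 < X := Nat.mul_pos (Nat.mul_pos r.factorial_pos (m-r).factorial_pos) hj1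
    exact_mod_cast this
  have hXpos : (0:ℝ) < X := by linarith
  have hmpos : (0:ℝ) < (m.factorial : ℝ) := by positivity
  have key : ((m-1).choose (r-1) : ℝ) * (X:ℝ) ^ s
      ≤ (r:ℝ) * (m.factorial : ℝ) ^ s := by
    have h1 : (X:ℝ) ^ s = (X:ℝ) ^ (s-1) * (X:ℝ) := by
      nth_rewrite 1 [show s = (s-1)+1 by ring]
      rw [Real.rpow_add hXpos, Real.rpow_one]
    have h2 : ((m.factorial:ℝ)) ^ s = (m.factorial:ℝ) ^ (s-1) * (m.factorial:ℝ) := by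
      nth_rewrite 1 [show s = (s-1)+1 by ring]
      rw [Real.rpow_add hmpos, Real.rpow_one]
    rw [h1, h2]
    have h3 : (X:ℝ) ^ (s-1) ≤ (m.factorial:ℝ) ^ (s-1) :=
      Real.rpow_le_rpow (le_of_lt hXpos) (by exact_mod_cast hXm) (by linarith)
    have h4 : ((m-1).choose (r-1) : ℝ) * (X:ℝ) ≤ (r:ℝ) * (m.factorial:ℝ) := by
      exact_mod_cast hCX
    calc ((m-1).choose (r-1) : ℝ) * ((X:ℝ) ^ (s-1) * (X:ℝ))
        = (X:ℝ) ^ (s-1) * (((m-1).choose (r-1) : ℝ) * (X:ℝ)) := by ring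
      _ ≤ (m.factorial:ℝ) ^ (s-1) * ((r:ℝ) * (m.factorial:ℝ)) := by
          apply mul_le_mul h3 h4 (by positivity) (by positivity)
      _ = (r:ℝ) * ((m.factorial:ℝ) ^ (s-1) * (m.factorial:ℝ)) := by ring
  have hr2 : (r:ℝ) ≤ 2 ^ r := by
    exact_mod_cast (Nat.lt_two_pow_self (n := r)).le
  calc ((m-1).choose (r-1) : ℝ) * ((X:ℕ):ℝ) ^ s ≤ (r:ℝ) * (m.factorial : ℝ) ^ s := key
    _ ≤ 2 ^ r * (m.factorial : ℝ) ^ s := by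
        apply mul_le_mul_of_nonneg_right hr2 (by positivity)

lemma my_geom (n : ℕ) : ∑ i ∈ Finset.range n, ((1:ℝ)/2)^(i+1) ≤ 1 := by
  have h : ∀ k : ℕ, ∑ i ∈ Finset.range k, ((1:ℝ)/2)^(i+1) = 1 - (1/2)^k := by
    intro k
    induction k with
    | zero => simp
    | succ k ih => rw [Finset.sum_range_succ, ih]; ring
  rw [h]
  have : (0:ℝ) ≤ (1/2)^n := by positivity
  linarith

lemma my_pow_bound {s ε ξR : ℝ} (hs : 1 < s) (hε : 0 < ε) (hξ : 1 ≤ ξR) (j : ℕ) :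
    ξR ^ j ≤ (j.factorial : ℝ) ^ s * ((s/ε) ^ s) ^ j * Real.exp (ε * ξR ^ (1/s)) := by
  have hs0 : (0:ℝ) < s := by linarith
  have hξ0 : (0:ℝ) < ξR := by linarith
  set y : ℝ := ξR ^ (1/s) with hy
  have hy0 : 0 < y := Real.rpow_pos_of_pos hξ0 _
  have hys : y ^ s = ξR := by
    rw [hy, ← Real.rpow_mul hξ0.le, one_div_mul_cancel hs0.ne', Real.rpow_one]
  have hse : 0 < s/ε := div_pos hs0 hε
  have step1 : y ^ j ≤ (j.factorial : ℝ) * (s/ε)^j * Real.exp ((ε/s) * y) := by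
    have h0 : 0 ≤ (ε/s) * y := by positivity
    have h1 := Real.pow_div_factorial_le_exp _ h0 j
    have h2 : ((ε/s) * y)^j ≤ (j.factorial : ℝ) * Real.exp ((ε/s)*y) := by
      rw [div_le_iff₀ (by positivity)] at h1
      linarith [h1]
    have h3 : y ^ j = (s/ε)^j * ((ε/s) * y)^j := by
      rw [mul_pow, ← mul_assoc, ← mul_pow]
      rw [div_mul_div_comm]
      rw [show s * ε / (ε * s) = 1 by rw [mul_comm]; exact div_self (by positivity)]
      simp
    rw [h3]
    calc (s/ε)^j * ((ε/s) * y)^j ≤ (s/ε)^j * ((j.factorial : ℝ) * Real.exp ((ε/s)*y)) := by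
          apply mul_le_mul_of_nonneg_left h2 (by positivity)
      _ = (j.factorial : ℝ) * (s/ε)^j * Real.exp ((ε/s) * y) := by ring
  have lhs_nonneg : (0:ℝ) ≤ y ^ j := by positivity
  have step2 := Real.rpow_le_rpow lhs_nonneg step1 hs0.le
  have lhs_eq : (y ^ j) ^ s = ξR ^ j := by
    rw [← Real.rpow_natCast y j, ← Real.rpow_mul hy0.le, mul_comm, Real.rpow_mul hy0.le,
      hys, Real.rpow_natCast]
  have rhs_eq : ((j.factorial : ℝ) * (s/ε)^j * Real.exp ((ε/s) * y)) ^ s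
      = (j.factorial : ℝ) ^ s * ((s/ε) ^ s) ^ j * Real.exp (ε * y) := by
    rw [Real.mul_rpow (by positivity) (by positivity),
      Real.mul_rpow (by positivity) (by positivity)]
    congr 1
    · congr 1
      rw [← Real.rpow_natCast (s/ε) j, ← Real.rpow_mul hse.le, mul_comm,
        Real.rpow_mul hse.le, Real.rpow_natCast]
    · rw [← Real.exp_mul]
      congr 1
      field_simp
  rw [lhs_eq, rhs_eq] at step2
  exact step2

lemma my_term {s C₀ h₀ ξR : ℝ} (hs : 1 ≤ s) (hC₀ : 0 < C₀) (hh₀ : 0 < h₀) (hξR : 1 ≤ ξR)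
    (i a j : ℕ) (hj : j ≤ a) :
    ((i+a).choose i : ℝ) * (ξR * (C₀ * h₀^(i+1) * ((i+1).factorial:ℝ)^s)) *
      (ξR^j * C₀^j * h₀^a * 4^a * (a.factorial:ℝ)^s / (j.factorial:ℝ)^s)
    ≤ (1/2)^(i+1) * (ξR^(j+1) * C₀^(j+1) * h₀^(i+a+1) * 4^(i+a+1) *
        ((i+a+1).factorial:ℝ)^s / ((j+1).factorial:ℝ)^s) := by
  have hξ0 : (0:ℝ) < ξR := by linarith
  have hL1 := my_L1 hs (i+a+1) (i+1) (j+1) (by omega) (by omega) (by omega) (by omega)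
  have e1 : i+a+1-1 = i+a := rfl
  have e2 : i+1-1 = i := rfl
  have e3 : i+a+1-(i+1) = a := by omega
  rw [e1, e2, e3] at hL1
  have hsplit : (((i+1).factorial * a.factorial * (j+1) : ℕ) : ℝ) ^ s
      = ((i+1).factorial:ℝ)^s * (a.factorial:ℝ)^s * ((j+1:ℕ):ℝ)^s := by
    push_cast
    rw [Real.mul_rpow (by positivity) (by positivity),
      Real.mul_rpow (by positivity) (by positivity)]
  rw [hsplit] at hL1
  have hfj : (0:ℝ) < (j.factorial:ℝ)^s := Real.rpow_pos_of_pos (by positivity) s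
  have hfj1 : (0:ℝ) < ((j+1).factorial:ℝ)^s := Real.rpow_pos_of_pos (by positivity) s
  have hfjsplit : ((j+1).factorial:ℝ)^s = ((j+1:ℕ):ℝ)^s * (j.factorial:ℝ)^s := by
    rw [Nat.factorial_succ]
    push_cast
    rw [Real.mul_rpow (by positivity) (by positivity)]
  rw [← mul_div_assoc, ← mul_div_assoc, div_le_div_iff₀ hfj hfj1, hfjsplit]
  have hP0 : (0:ℝ) ≤ ξR^(j+1) * C₀^(j+1) * h₀^(i+a+1) * (j.factorial:ℝ)^s * 4^a :=
    mul_nonneg (mul_nonneg (mul_nonneg (mul_nonneg (pow_nonneg hξ0.le _)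
      (pow_nonneg hC₀.le _)) (pow_nonneg hh₀.le _))
      (Real.rpow_nonneg (Nat.cast_nonneg _) s)) (by positivity)
  have h4 : (4:ℝ)^(i+a+1) = 4^(i+1) * 4^a := by rw [← pow_add]; congr 1; omega
  have h2 : (2:ℝ)^(i+1) * 2^(i+1) = (4:ℝ)^(i+1) := by rw [← mul_pow]; norm_num
  have h24 : ((1:ℝ)/2)^(i+1) * 4^(i+a+1) = 2^(i+1) * 4^a := by
    rw [div_pow, one_pow, h4, ← h2]
    field_simp
  calc ((i+a).choose i : ℝ) * (ξR * (C₀ * h₀^(i+1) * ((i+1).factorial:ℝ)^s)) *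
      (ξR^j * C₀^j * h₀^a * 4^a * (a.factorial:ℝ)^s) * (((j+1:ℕ):ℝ)^s * (j.factorial:ℝ)^s)
      = (ξR^(j+1) * C₀^(j+1) * h₀^(i+a+1) * (j.factorial:ℝ)^s * 4^a) *
        (((i+a).choose i : ℝ) * (((i+1).factorial:ℝ)^s * (a.factorial:ℝ)^s
          * ((j+1:ℕ):ℝ)^s)) := by
        push_cast
        ring
    _ ≤ (ξR^(j+1) * C₀^(j+1) * h₀^(i+a+1) * (j.factorial:ℝ)^s * 4^a) *
        (2^(i+1) * ((i+a+1).factorial:ℝ)^s) := mul_le_mul_of_nonneg_left hL1 hP0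
    _ = (2^(i+1) * 4^a) * (ξR^(j+1) * C₀^(j+1) * h₀^(i+a+1) *
        ((i+a+1).factorial:ℝ)^s * (j.factorial:ℝ)^s) := by ring
    _ = (((1:ℝ)/2)^(i+1) * 4^(i+a+1)) * (ξR^(j+1) * C₀^(j+1) * h₀^(i+a+1) *
        ((i+a+1).factorial:ℝ)^s * (j.factorial:ℝ)^s) := by rw [h24]
    _ = (1/2)^(i+1) * (ξR^(j+1) * C₀^(j+1) * h₀^(i+a+1) * 4^(i+a+1) *
        ((i+a+1).factorial:ℝ)^s) * (j.factorial:ℝ)^s := by ring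

lemma my_step {s C₀ h₀ ξR : ℝ} (hs : 1 ≤ s) (hC₀ : 0 < C₀) (hh₀ : 0 < h₀) (hξR : 1 ≤ ξR)
    (n : ℕ) :
    ∑ i ∈ Finset.range (n+1), (n.choose i : ℝ) *
        (ξR * (C₀ * h₀^(i+1) * ((i+1).factorial:ℝ)^s)) *
        (∑ j ∈ Finset.range (n-i+1),
          ξR^j * C₀^j * h₀^(n-i) * 4^(n-i) * ((n-i).factorial:ℝ)^s / (j.factorial:ℝ)^s)
    ≤ ∑ j ∈ Finset.range (n+1+1),
        ξR^j * C₀^j * h₀^(n+1) * 4^(n+1) * ((n+1).factorial:ℝ)^s / (j.factorial:ℝ)^s := by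
  have hξ0 : (0:ℝ) < ξR := by linarith
  set v : ℕ → ℝ := fun j => ξR^j * C₀^j * h₀^(n+1) * 4^(n+1) *
    ((n+1).factorial:ℝ)^s / (j.factorial:ℝ)^s with hv
  have hv0 : ∀ j, 0 ≤ v j := by
    intro j
    apply div_nonneg _ (Real.rpow_nonneg (Nat.cast_nonneg _) s)
    exact mul_nonneg (mul_nonneg (mul_nonneg (mul_nonneg (pow_nonneg hξ0.le _)
      (pow_nonneg hC₀.le _)) (pow_nonneg hh₀.le _)) (by positivity))
      (Real.rpow_nonneg (Nat.cast_nonneg _) s)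
  have hS0 : 0 ≤ ∑ j ∈ Finset.range (n+1+1), v j := Finset.sum_nonneg fun j _ => hv0 j
  calc ∑ i ∈ Finset.range (n+1), (n.choose i : ℝ) *
        (ξR * (C₀ * h₀^(i+1) * ((i+1).factorial:ℝ)^s)) *
        (∑ j ∈ Finset.range (n-i+1),
          ξR^j * C₀^j * h₀^(n-i) * 4^(n-i) * ((n-i).factorial:ℝ)^s / (j.factorial:ℝ)^s)
      ≤ ∑ i ∈ Finset.range (n+1), ((1:ℝ)/2)^(i+1) * (∑ j ∈ Finset.range (n+1+1), v j) := by
        apply Finset.sum_le_sum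
        intro i hi
        have hi' : i ≤ n := Nat.lt_succ_iff.mp (Finset.mem_range.mp hi)
        have ha : i + (n - i) = n := by omega
        calc (n.choose i : ℝ) * (ξR * (C₀ * h₀^(i+1) * ((i+1).factorial:ℝ)^s)) *
            (∑ j ∈ Finset.range (n-i+1),
              ξR^j * C₀^j * h₀^(n-i) * 4^(n-i) * ((n-i).factorial:ℝ)^s / (j.factorial:ℝ)^s)
            = ∑ j ∈ Finset.range (n-i+1), (n.choose i : ℝ) *
              (ξR * (C₀ * h₀^(i+1) * ((i+1).factorial:ℝ)^s)) *
              (ξR^j * C₀^j * h₀^(n-i) * 4^(n-i) * ((n-i).factorial:ℝ)^s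
                / (j.factorial:ℝ)^s) := by
              rw [Finset.mul_sum]
          _ ≤ ∑ j ∈ Finset.range (n-i+1), ((1:ℝ)/2)^(i+1) * v (j+1) := by
              apply Finset.sum_le_sum
              intro j hj
              have hj' : j ≤ n - i := Nat.lt_succ_iff.mp (Finset.mem_range.mp hj)
              have hterm := my_term hs hC₀ hh₀ hξR i (n-i) j hj'
              rw [ha] at hterm
              exact hterm
          _ = ((1:ℝ)/2)^(i+1) * ∑ j ∈ Finset.range (n-i+1), v (j+1) := by
              rw [Finset.mul_sum]
          _ ≤ ((1:ℝ)/2)^(i+1) * ∑ j ∈ Finset.range (n+1+1), v j := by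
              apply mul_le_mul_of_nonneg_left _ (by positivity)
              have h1 : ∑ j ∈ Finset.range (n-i+1), v (j+1)
                  ≤ ∑ j ∈ Finset.range (n+1), v (j+1) :=
                Finset.sum_le_sum_of_subset_of_nonneg
                  (Finset.range_subset_range.mpr (by omega)) (fun k _ _ => hv0 (k+1))
              have h2 : ∑ j ∈ Finset.range (n+1+1), v j
                  = (∑ j ∈ Finset.range (n+1), v (j+1)) + v 0 := Finset.sum_range_succ' v (n+1)
              have := hv0 0
              linarith
    _ = (∑ i ∈ Finset.range (n+1), ((1:ℝ)/2)^(i+1)) * (∑ j ∈ Finset.range (n+1+1), v j) := by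
        rw [Finset.sum_mul]
    _ ≤ 1 * (∑ j ∈ Finset.range (n+1+1), v j) :=
        mul_le_mul_of_nonneg_right (my_geom (n+1)) hS0
    _ = _ := one_mul _

lemma my_final {s ε C₀ h₀ ξR : ℝ} (hs : 1 < s) (hε : 0 < ε) (hC₀ : 0 < C₀) (hh₀ : 0 < h₀)
    (hξR : 1 ≤ ξR) (m : ℕ) :
    ∑ j ∈ Finset.range (m+1),
        ξR^j * C₀^j * h₀^m * 4^m * (m.factorial:ℝ)^s / (j.factorial:ℝ)^s
    ≤ (8 * h₀ * max 1 (C₀ * (s/ε)^s))^m * (m.factorial:ℝ)^s * Real.exp (ε * ξR^(1/s)) := by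
  have hξ0 : (0:ℝ) < ξR := by linarith
  set M : ℝ := max 1 (C₀ * (s/ε)^s) with hM
  have hM1 : (1:ℝ) ≤ M := le_max_left _ _
  have hM0 : (0:ℝ) < M := by linarith
  set F : ℝ := (m.factorial:ℝ)^s with hF
  have hF0 : (0:ℝ) < F := Real.rpow_pos_of_pos (by positivity) s
  set Ex : ℝ := Real.exp (ε * ξR^(1/s)) with hEx
  have hEx0 : (0:ℝ) < Ex := Real.exp_pos _
  have hP0 : (0:ℝ) < (s/ε)^s := Real.rpow_pos_of_pos (by positivity) s
  calc ∑ j ∈ Finset.range (m+1),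
        ξR^j * C₀^j * h₀^m * 4^m * F / (j.factorial:ℝ)^s
      ≤ ∑ _j ∈ Finset.range (m+1), M^m * ((4*h₀)^m * F * Ex) := by
        apply Finset.sum_le_sum
        intro j hj
        have hj' : j ≤ m := Nat.lt_succ_iff.mp (Finset.mem_range.mp hj)
        have hfj : (0:ℝ) < (j.factorial:ℝ)^s := Real.rpow_pos_of_pos (by positivity) s
        have h1 := my_pow_bound hs hε hξR j
        calc ξR^j * C₀^j * h₀^m * 4^m * F / (j.factorial:ℝ)^s
            ≤ ((j.factorial:ℝ)^s * ((s/ε)^s)^j * Ex) * C₀^j * h₀^m * 4^m * F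
                / (j.factorial:ℝ)^s := by
              apply (div_le_div_iff_of_pos_right hfj).mpr
              apply mul_le_mul_of_nonneg_right _ hF0.le
              apply mul_le_mul_of_nonneg_right _ (by positivity)
              apply mul_le_mul_of_nonneg_right _ (pow_nonneg hh₀.le m)
              exact mul_le_mul_of_nonneg_right h1 (pow_nonneg hC₀.le j)
          _ = (C₀ * (s/ε)^s)^j * ((4*h₀)^m * F * Ex) := by
              field_simp
              ring
          _ ≤ M^j * ((4*h₀)^m * F * Ex) := by
              apply mul_le_mul_of_nonneg_right _ (by positivity)
              exact pow_le_pow_left₀ (by positivity) (le_max_right _ _) j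
          _ ≤ M^m * ((4*h₀)^m * F * Ex) := by
              apply mul_le_mul_of_nonneg_right _ (by positivity)
              exact pow_le_pow_right₀ hM1 hj'
    _ = ((m+1:ℕ):ℝ) * (M^m * ((4*h₀)^m * F * Ex)) := by
        rw [Finset.sum_const, Finset.card_range, nsmul_eq_mul]
    _ ≤ (2:ℝ)^m * (M^m * ((4*h₀)^m * F * Ex)) := by
        apply mul_le_mul_of_nonneg_right _ (by positivity)
        exact_mod_cast Nat.succ_le_of_lt (Nat.lt_two_pow_self (n := m))
    _ = (8 * h₀ * M)^m * F * Ex := by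
        rw [show (8:ℝ) * h₀ * M = 2 * (M * (4 * h₀)) by ring, mul_pow, mul_pow]
        ring

/-- Variant of the "important lemma" with a complex exponent of nonpositive real part:
if `g : ℝ → ℂ` is smooth with Gevrey-`s` bounds and `Re g ≤ 0`, then for every `ε > 0`
there is `C_ε > 0` with `e^{-ε ξ^{1/s}} |dᵐ/dtᵐ e^{ξ g(t)}| ≤ C_ε^m (m!)^s` for all
`t ∈ ℝ`, `m ∈ ℕ₀` and integers `ξ ≥ 1`. -/
theorem stmt_4 (s : ℝ) (hs : 1 < s) (g : ℝ → ℂ) (hg : ContDiff ℝ (⊤ : ℕ∞) g)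
    (C₀ h₀ : ℝ) (hC₀ : 0 < C₀) (hh₀ : 0 < h₀)
    (hG : ∀ (t : ℝ) (ℓ : ℕ),
      ‖iteratedDeriv ℓ g t‖ ≤ C₀ * h₀ ^ ℓ * (Nat.factorial ℓ : ℝ) ^ s)
    (hRe : ∀ t : ℝ, (g t).re ≤ 0) :
    ∀ ε : ℝ, 0 < ε → ∃ Cε : ℝ, 0 < Cε ∧ ∀ (t : ℝ) (m : ℕ) (ξ : ℤ), 1 ≤ ξ →
      Real.exp (-ε * (ξ : ℝ) ^ (1 / s)) *
        ‖iteratedDeriv m (fun τ : ℝ => Complex.exp ((ξ : ℂ) * g τ)) t‖ ≤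
      Cε ^ m * (Nat.factorial m : ℝ) ^ s := by
  intro ε hε
  have hM1 : (1:ℝ) ≤ max 1 (C₀ * (s/ε)^s) := le_max_left _ _
  refine ⟨8 * h₀ * max 1 (C₀ * (s/ε)^s), by nlinarith, ?_⟩
  intro t m ξ hξ
  have hs1 : (1:ℝ) ≤ s := hs.le
  set ξR : ℝ := (ξ:ℝ) with hξRdef
  have hξR1 : (1:ℝ) ≤ ξR := by rw [hξRdef]; exact_mod_cast hξ
  have hξ0 : (0:ℝ) < ξR := by linarith
  set E : ℝ → ℂ := fun τ : ℝ => Complex.exp ((ξ:ℂ) * g τ) with hEdef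
  set φ : ℝ → ℂ := fun τ : ℝ => (ξ:ℂ) * deriv g τ with hφdef
  -- smoothness facts
  have hg' : ContDiff ℝ (⊤:ℕ∞) (deriv g) :=
    (contDiff_infty_iff_deriv.mp (hg.of_le (by simp))).2
  have hE : ContDiff ℝ (⊤:ℕ∞) E :=
    Complex.contDiff_exp.comp (contDiff_const.mul (hg.of_le (by simp)))
  have hφ : ContDiff ℝ (⊤:ℕ∞) φ := contDiff_const.mul hg'
  have hdE : deriv E = fun τ : ℝ => φ τ * E τ := by
    funext τ
    have h1 : HasDerivAt g (deriv g τ) τ := ((hg.differentiable (by simp)) τ).hasDerivAt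
    have h2 : HasDerivAt (fun τ : ℝ => (ξ:ℂ) * g τ) ((ξ:ℂ) * deriv g τ) τ := h1.const_mul _
    have h3 := h2.cexp
    rw [hEdef, hφdef]
    rw [h3.deriv]
    ring
  have hcm : ∀ (k : ℕ) (x : ℝ), iteratedDeriv k φ x = (ξ:ℂ) * iteratedDeriv k (deriv g) x := by
    intro k x
    have := iteratedDerivWithin_const_smul (𝕜 := ℝ) (F := ℂ) (R := ℂ)
      (Set.mem_univ x) uniqueDiffOn_univ (ξ:ℂ)
      (((hg'.of_le (by exact_mod_cast le_top)).contDiffOn (n := k)) x (Set.mem_univ x))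
    rw [hφdef]
    simp only [← iteratedDerivWithin_univ]
    simpa [smul_eq_mul] using this
  have hnc : ‖((ξ:ℂ))‖ = ξR := by
    rw [hξRdef, show ((ξ:ℂ)) = (((ξ:ℝ)):ℂ) by norm_cast, Complex.norm_real,
      Real.norm_eq_abs]
    exact abs_of_pos (by linarith)
  -- the main inductive bound
  have hT0 : ∀ (k : ℕ), 0 ≤ ∑ j ∈ Finset.range (k+1),
      ξR^j * C₀^j * h₀^k * 4^k * (k.factorial:ℝ)^s / (j.factorial:ℝ)^s := by
    intro k
    apply Finset.sum_nonneg
    intro j _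
    apply div_nonneg _ (Real.rpow_nonneg (Nat.cast_nonneg _) s)
    exact mul_nonneg (mul_nonneg (mul_nonneg (mul_nonneg (pow_nonneg hξ0.le _)
      (pow_nonneg hC₀.le _)) (pow_nonneg hh₀.le _)) (by positivity))
      (Real.rpow_nonneg (Nat.cast_nonneg _) s)
  have main : ∀ (k : ℕ) (x : ℝ), ‖iteratedDeriv k E x‖
      ≤ ∑ j ∈ Finset.range (k+1),
          ξR^j * C₀^j * h₀^k * 4^k * (k.factorial:ℝ)^s / (j.factorial:ℝ)^s := by
    intro k
    induction k using Nat.strong_induction_on with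
    | _ k ih =>
      match k with
      | 0 =>
        intro x
        have h1 : ‖iteratedDeriv 0 E x‖ ≤ 1 := by
          rw [iteratedDeriv_zero]
          simp only [hEdef]
          rw [Complex.norm_exp]
          have hre : ((ξ:ℂ) * g x).re = ξR * (g x).re := by
            simp [Complex.mul_re, hξRdef]
          rw [hre]
          calc Real.exp (ξR * (g x).re) ≤ Real.exp 0 := by
                apply Real.exp_le_exp.mpr
                nlinarith [hRe x]
            _ = 1 := Real.exp_zero
        have h2 : ∑ j ∈ Finset.range (0+1),
            ξR^j * C₀^j * h₀^0 * 4^0 * ((Nat.factorial 0 : ℕ):ℝ)^s / ((j.factorial : ℕ):ℝ)^s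
            = 1 := by
          simp
        rw [h2]
        exact h1
      | (n+1) =>
        intro x
        calc ‖iteratedDeriv (n+1) E x‖
            = ‖iteratedDeriv n (deriv E) x‖ := by rw [iteratedDeriv_succ']
          _ = ‖iteratedFDeriv ℝ n (fun τ => φ τ * E τ) x‖ := by
              rw [hdE, norm_iteratedFDeriv_eq_norm_iteratedDeriv]
          _ ≤ ∑ i ∈ Finset.range (n+1), (n.choose i : ℝ) *
                ‖iteratedFDeriv ℝ i φ x‖ * ‖iteratedFDeriv ℝ (n-i) E x‖ :=
              norm_iteratedFDeriv_mul_le hφ hE x (by exact_mod_cast le_top)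
          _ ≤ ∑ i ∈ Finset.range (n+1), (n.choose i : ℝ) *
                (ξR * (C₀ * h₀^(i+1) * ((i+1).factorial:ℝ)^s)) *
                (∑ j ∈ Finset.range (n-i+1),
                  ξR^j * C₀^j * h₀^(n-i) * 4^(n-i) * ((n-i).factorial:ℝ)^s
                    / (j.factorial:ℝ)^s) := by
              apply Finset.sum_le_sum
              intro i hi
              have hφb : ‖iteratedFDeriv ℝ i φ x‖
                  ≤ ξR * (C₀ * h₀^(i+1) * ((i+1).factorial:ℝ)^s) := by
                rw [norm_iteratedFDeriv_eq_norm_iteratedDeriv, hcm i x, ← iteratedDeriv_succ',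
                  norm_mul, hnc]
                apply mul_le_mul_of_nonneg_left _ hξ0.le
                exact hG x (i+1)
              have hEb : ‖iteratedFDeriv ℝ (n-i) E x‖
                  ≤ ∑ j ∈ Finset.range (n-i+1),
                      ξR^j * C₀^j * h₀^(n-i) * 4^(n-i) * ((n-i).factorial:ℝ)^s
                        / (j.factorial:ℝ)^s := by
                rw [norm_iteratedFDeriv_eq_norm_iteratedDeriv]
                exact ih (n-i) (by omega) x
              have hc0 : (0:ℝ) ≤ (n.choose i : ℝ) := Nat.cast_nonneg _
              have hb0 : (0:ℝ) ≤ ξR * (C₀ * h₀^(i+1) * ((i+1).factorial:ℝ)^s) := by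
                apply mul_nonneg hξ0.le
                apply mul_nonneg (mul_nonneg hC₀.le (pow_nonneg hh₀.le _))
                exact Real.rpow_nonneg (Nat.cast_nonneg _) s
              exact mul_le_mul (mul_le_mul_of_nonneg_left hφb hc0) hEb
                (norm_nonneg _) (mul_nonneg hc0 hb0)
          _ ≤ ∑ j ∈ Finset.range (n+1+1),
                ξR^j * C₀^j * h₀^(n+1) * 4^(n+1) * ((n+1).factorial:ℝ)^s
                  / (j.factorial:ℝ)^s :=
              my_step hs1 hC₀ hh₀ hξR1 n
  -- conclude
  have hTm := main m t
  have hfin := my_final hs hε hC₀ hh₀ hξR1 m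
  calc Real.exp (-ε * ξR^(1/s)) * ‖iteratedDeriv m E t‖
      ≤ Real.exp (-ε * ξR^(1/s)) *
        ((8 * h₀ * max 1 (C₀ * (s/ε)^s))^m * (m.factorial:ℝ)^s * Real.exp (ε * ξR^(1/s))) :=
        mul_le_mul_of_nonneg_left (hTm.trans hfin) (Real.exp_nonneg _)
    _ = (8 * h₀ * max 1 (C₀ * (s/ε)^s))^m * (m.factorial:ℝ)^s *
        (Real.exp (-ε * ξR^(1/s)) * Real.exp (ε * ξR^(1/s))) := by ring
    _ = (8 * h₀ * max 1 (C₀ * (s/ε)^s))^m * (m.factorial:ℝ)^s := by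
        rw [← Real.exp_add, show -ε * ξR^(1/s) + ε * ξR^(1/s) = 0 by ring, Real.exp_zero,
          mul_one]
end

section
/- Let s > 1, let A : ℝ → ℝ be a smooth function satisfying Gevrey-s bounds with constants C_A, h_A > 0, and suppose constants C₀, h₀, ε₀ > 0 and a family of smooth functions v_ξ : ℝ → ℂ (ξ ∈ ℤ) are given such that |v_ξ^{(β)}(t)| ≤ C₀·h₀^β·(β!)^s·e^{−ε₀·|ξ|^{1/s}} for all t ∈ ℝ, β ∈ ℕ₀ and ξ ∈ ℤ. Then there exist constants C, h > 0 such that |dᵅ/dtᵅ ( v_ξ(t)·e^{i·ξ·A(t)} )| ≤ C·h^α·(α!)^s·e^{−(ε₀/2)·|ξ|^{1/s}} for all t ∈ ℝ, α ∈ ℕ₀ and ξ ∈ ℤ. -/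
open scoped ContDiff
open Finset


private lemma gev_aux1 (c y : ℝ) (hc : 0 < c) (hy : 0 ≤ y) (k : ℕ) :
    y ^ k ≤ (k.factorial : ℝ) * (1/c)^k * Real.exp (c*y) := by
  have h := Real.pow_div_factorial_le_exp (x := c*y) (mul_nonneg hc.le hy) k
  rw [mul_pow] at h
  have hfk : (0:ℝ) < k.factorial := by positivity
  rw [div_le_iff₀ hfk] at h
  have hck : (0:ℝ) < c^k := pow_pos hc k
  calc y^k = (c^k * y^k) * (1/c)^k := by
        rw [one_div, inv_pow]; field_simp
    _ ≤ (Real.exp (c*y) * k.factorial) * (1/c)^k := by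
        apply mul_le_mul_of_nonneg_right h (by positivity)
    _ = k.factorial * (1/c)^k * Real.exp (c*y) := by ring

private lemma rpow_nat_comm {a : ℝ} (ha : 0 ≤ a) (s : ℝ) (k : ℕ) :
    (a ^ k) ^ s = (a ^ s) ^ k := by
  rw [← Real.rpow_natCast a k, ← Real.rpow_mul ha, mul_comm, Real.rpow_mul ha,
    Real.rpow_natCast]

private lemma gev_aux2 (s c : ℝ) (hs : 1 ≤ s) (hc : 0 < c) (k : ℕ) (x : ℝ) (hx : 0 ≤ x) :
    x ^ k ≤ (k.factorial:ℝ)^s * ((s/c)^s)^k * Real.exp (c * x^(1/s)) := by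
  have hs0 : (0:ℝ) < s := lt_of_lt_of_le one_pos hs
  set y := x ^ (1/s) with hydef
  have hy : 0 ≤ y := Real.rpow_nonneg hx _
  have h1 : y ^ k ≤ (k.factorial:ℝ) * (s/c)^k * Real.exp ((c/s) * y) := by
    have h := gev_aux1 (c/s) y (div_pos hc hs0) hy k
    rwa [one_div_div] at h
  have h2 := Real.rpow_le_rpow (pow_nonneg hy k) h1 hs0.le
  have hL : ((y ^ k) ^ s) = x ^ k := by
    rw [rpow_nat_comm hy s k]
    congr 1
    rw [hydef, ← Real.rpow_mul hx, one_div_mul_cancel hs0.ne', Real.rpow_one]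
  have hR : ((k.factorial:ℝ) * (s/c)^k * Real.exp ((c/s)*y)) ^ s
      = (k.factorial:ℝ)^s * ((s/c)^s)^k * Real.exp (c*y) := by
    rw [Real.mul_rpow (by positivity) (Real.exp_nonneg _),
      Real.mul_rpow (by positivity) (by positivity),
      rpow_nat_comm (by positivity) s k, ← Real.exp_mul]
    congr 2
    field_simp
  rw [hL, hR] at h2
  exact h2

private lemma gev_geom (n : ℕ) : ∑ j ∈ Finset.range n, ((1:ℝ)/2)^j ≤ 2 := by
  rw [geom_sum_eq (by norm_num : (1/2:ℝ) ≠ 1) n]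
  rw [div_le_iff_of_neg (by norm_num : (1/2:ℝ) - 1 < 0)]
  have h : (0:ℝ) ≤ (1/2:ℝ)^n := by positivity
  linarith

private lemma gev_fact (s : ℝ) (hs : 1 ≤ s) {b m j : ℕ} (hj : j ≤ b) (hbm : b ≤ m) :
    (b.choose j : ℝ) * ((j.factorial * (m-j).factorial : ℕ) : ℝ)^s
      ≤ (m.factorial : ℝ)^s := by
  have hjm : j ≤ m := hj.trans hbm
  have hkey : (m.choose j) * j.factorial * (m-j).factorial = m.factorial :=
    Nat.choose_mul_factorial_mul_factorial hjm
  have hc1 : (1:ℝ) ≤ (m.choose j : ℝ) := by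
    exact_mod_cast Nat.succ_le_of_lt (Nat.choose_pos hjm)
  have hc0 : (0:ℝ) < (m.choose j:ℝ) := lt_of_lt_of_le one_pos hc1
  have hbc : (b.choose j : ℝ) ≤ (m.choose j : ℝ) := by
    exact_mod_cast Nat.choose_le_choose j hbm
  have hfm : ((j.factorial * (m-j).factorial : ℕ):ℝ) = (m.factorial:ℝ) / (m.choose j:ℝ) := by
    rw [eq_div_iff hc0.ne']
    have := congrArg (Nat.cast : ℕ → ℝ) hkey
    push_cast at this ⊢
    linarith [this]
  rw [hfm, Real.div_rpow (by positivity) hc0.le]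
  have hcs : (m.choose j:ℝ) ≤ (m.choose j:ℝ)^s := by
    calc (m.choose j:ℝ) = (m.choose j:ℝ)^(1:ℝ) := (Real.rpow_one _).symm
      _ ≤ _ := Real.rpow_le_rpow_of_exponent_le hc1 hs
  have hcsp : (0:ℝ) < (m.choose j:ℝ)^s := Real.rpow_pos_of_pos hc0 _
  have hfs : (0:ℝ) ≤ (m.factorial:ℝ)^s := Real.rpow_nonneg (by positivity) _
  calc (b.choose j:ℝ) * ((m.factorial:ℝ)^s / (m.choose j:ℝ)^s)
      ≤ (m.choose j:ℝ)^s * ((m.factorial:ℝ)^s / (m.choose j:ℝ)^s) := by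
        apply mul_le_mul_of_nonneg_right (hbc.trans hcs) (by positivity)
    _ = (m.factorial:ℝ)^s := by field_simp

noncomputable def gevW (A : ℝ → ℝ) (ξ : ℤ) (v : ℝ → ℂ) : ℕ → ℝ → ℂ
  | 0 => v
  | (n+1) => fun t => deriv (gevW A ξ v n) t
      + (Complex.I * (ξ:ℂ) * ((deriv A t : ℝ):ℂ)) * gevW A ξ v n t

lemma gevW_contDiff {A : ℝ → ℝ} {v : ℝ → ℂ} (hA : ContDiff ℝ ∞ A)
    (hv : ContDiff ℝ ∞ v) (ξ : ℤ) : ∀ n, ContDiff ℝ ∞ (gevW A ξ v n)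
  | 0 => hv
  | (n+1) => by
    have ih := gevW_contDiff hA hv ξ n
    have h1 : ContDiff ℝ ∞ (deriv (gevW A ξ v n)) := (contDiff_infty_iff_deriv.mp ih).2
    have h2 : ContDiff ℝ ∞ (fun t => ((deriv A t:ℝ):ℂ)) :=
      Complex.ofRealCLM.contDiff.comp (contDiff_infty_iff_deriv.mp hA).2
    exact h1.add ((contDiff_const.mul h2).mul ih)

lemma gevW_repr {A : ℝ → ℝ} {v : ℝ → ℂ} (hA : ContDiff ℝ ∞ A) (hv : ContDiff ℝ ∞ v)
    (ξ : ℤ) (n : ℕ) :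
    iteratedDeriv n (fun τ : ℝ => v τ * Complex.exp (Complex.I * (ξ:ℂ) * (A τ:ℂ)))
      = fun t => gevW A ξ v n t * Complex.exp (Complex.I * (ξ:ℂ) * (A t:ℂ)) := by
  have hone : (1 : WithTop ℕ∞) ≤ ∞ := by exact_mod_cast le_top
  induction n with
  | zero => simp [gevW]
  | succ n ih =>
    rw [iteratedDeriv_succ, ih]
    funext t
    have hAd : HasDerivAt A (deriv A t) t :=
      ((hA.differentiable (lt_of_lt_of_le zero_lt_one hone).ne') t).hasDerivAt
    have hE : HasDerivAt (fun τ : ℝ => Complex.exp (Complex.I * (ξ:ℂ) * (A τ:ℂ)))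
        (Complex.exp (Complex.I*(ξ:ℂ)*(A t:ℂ)) * (Complex.I*(ξ:ℂ)*((deriv A t : ℝ):ℂ))) t :=
      ((hAd.ofReal_comp).const_mul (Complex.I * (ξ:ℂ))).cexp
    have hw : HasDerivAt (gevW A ξ v n) (deriv (gevW A ξ v n) t) t :=
      (((gevW_contDiff hA hv ξ n).differentiable (lt_of_lt_of_le zero_lt_one hone).ne') t).hasDerivAt
    have hd := (hw.mul hE).deriv
    rw [show (fun t => gevW A ξ v n t * Complex.exp (Complex.I * (ξ:ℂ) * (A t:ℂ)))
      = gevW A ξ v n * fun τ => Complex.exp (Complex.I * (ξ:ℂ) * (A τ:ℂ)) from rfl, hd]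
    show _ = (deriv (gevW A ξ v n) t
      + (Complex.I * (ξ:ℂ) * ((deriv A t : ℝ):ℂ)) * gevW A ξ v n t) * _
    ring

lemma gevW_zero (A : ℝ → ℝ) (ξ : ℤ) (v : ℝ → ℂ) : gevW A ξ v 0 = v := rfl

lemma gevW_succ (A : ℝ → ℝ) (ξ : ℤ) (v : ℝ → ℂ) (n : ℕ) :
    gevW A ξ v (n+1) = fun t => deriv (gevW A ξ v n) t
      + (Complex.I * (ξ:ℂ) * ((deriv A t : ℝ):ℂ)) * gevW A ξ v n t := rfl

-- norm of iterated derivative of the factor B = I ξ A'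
lemma gevB_norm {A : ℝ → ℝ} (hA : ContDiff ℝ ∞ A) (s CA hA' : ℝ)
    (hAG : ∀ (t : ℝ) (ℓ : ℕ), |iteratedDeriv ℓ A t| ≤ CA * hA' ^ ℓ * (ℓ.factorial : ℝ) ^ s)
    (ξ : ℤ) (j : ℕ) (τ : ℝ) :
    ‖iteratedDeriv j (fun t => Complex.I * (ξ:ℂ) * ((deriv A t : ℝ):ℂ)) τ‖
      ≤ |(ξ:ℝ)| * (CA * hA'^(j+1) * ((j+1).factorial : ℝ)^s) := by
  have hA' : ContDiff ℝ ∞ (deriv A) := (contDiff_infty_iff_deriv.mp hA).2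
  have hoc : ContDiff ℝ ∞ (fun t => ((deriv A t:ℝ):ℂ)) :=
    Complex.ofRealCLM.contDiff.comp hA'
  have hj : ((j:ℕ) : WithTop ℕ∞) ≤ ∞ := by exact_mod_cast le_top
  have h1 : (fun t => Complex.I * (ξ:ℂ) * ((deriv A t:ℝ):ℂ))
      = (Complex.I * (ξ:ℂ)) • (fun t => ((deriv A t:ℝ):ℂ)) := by
    funext x; simp [mul_assoc]
  rw [h1, ← iteratedDerivWithin_univ,
    iteratedDerivWithin_const_smul (hx := Set.mem_univ τ) (h := uniqueDiffOn_univ) _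
      ((hoc.contDiffOn.of_le hj) τ (Set.mem_univ τ)),
    iteratedDerivWithin_univ, norm_smul]
  have h2 : ‖Complex.I * (ξ:ℂ)‖ = |(ξ:ℝ)| := by
    simp
  have h3 : ‖iteratedDeriv j (fun t => ((deriv A t:ℝ):ℂ)) τ‖
      = ‖iteratedDeriv j (deriv A) τ‖ := by
    rw [← norm_iteratedFDeriv_eq_norm_iteratedDeriv, ← norm_iteratedFDeriv_eq_norm_iteratedDeriv]
    have he : (fun t => ((deriv A t:ℝ):ℂ)) = (RCLike.ofRealLI (K := ℂ)) ∘ (deriv A) := by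
      funext x; simp [RCLike.ofRealLI]; rfl
    rw [he]
    exact LinearIsometry.norm_iteratedFDeriv_comp_left _ (hA'.contDiffAt (x := τ)) hj
  rw [h2, h3, ← iteratedDeriv_succ']
  have := hAG τ (j+1)
  rw [Real.norm_eq_abs]
  apply mul_le_mul_of_nonneg_left _ (abs_nonneg _)
  exact this
section
variable {A : ℝ → ℝ} {v : ℝ → ℂ}

lemma gevW_bound (s : ℝ) (hs : 1 ≤ s) (hA : ContDiff ℝ ∞ A)
    (CA hA' : ℝ) (hCA : 0 < CA) (hhA : 0 < hA')
    (hAG : ∀ (t : ℝ) (ℓ : ℕ), |iteratedDeriv ℓ A t| ≤ CA * hA' ^ ℓ * (ℓ.factorial : ℝ) ^ s)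
    (C₀ : ℝ) (hC₀ : 0 ≤ C₀) (D : ℝ) (hD : 0 ≤ D)
    (K : ℝ) (hK : 0 < K)
    (hgeo : ∀ n : ℕ, ∑ j ∈ Finset.range n, (hA'/K)^j * ((j+1 : ℕ):ℝ)^s ≤ 2)
    (H : ℝ) (hH : H = K + 2*CA*hA')
    (hv : ContDiff ℝ ∞ v) (ξ : ℤ)
    (hvb : ∀ (t : ℝ) (β : ℕ), ‖iteratedDeriv β v t‖ ≤ C₀ * K ^ β * (β.factorial:ℝ)^s * D) :
    ∀ (α β : ℕ) (t : ℝ), ‖iteratedDeriv β (gevW A ξ v α) t‖ ≤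
      C₀ * D * K^β * H^α * ∑ k ∈ Finset.range (α+1),
        (α.choose k : ℝ) * |(ξ:ℝ)|^k * ((α+β-k).factorial : ℝ)^s := by
  have hX : (0:ℝ) ≤ |(ξ:ℝ)| := abs_nonneg _
  have hH0 : 0 < H := by rw [hH]; positivity
  set X := |(ξ:ℝ)| with hXdef
  intro α
  induction α with
  | zero =>
    intro β t
    rw [gevW_zero]
    refine (hvb t β).trans (le_of_eq ?_)
    simp [Nat.choose_self]
    ring
  | succ α ih =>
    intro β t
    have hw := gevW_contDiff hA hv ξ
    have hwd : ContDiff ℝ ∞ (deriv (gevW A ξ v α)) := (contDiff_infty_iff_deriv.mp (hw α)).2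
    have hB : ContDiff ℝ ∞ (fun t => Complex.I * (ξ:ℂ) * ((deriv A t:ℝ):ℂ)) :=
      contDiff_const.mul (Complex.ofRealCLM.contDiff.comp (contDiff_infty_iff_deriv.mp hA).2)
    have hβ : ((β:ℕ) : WithTop ℕ∞) ≤ ∞ := by exact_mod_cast le_top
    -- split the iterated derivative
    have heq : iteratedDeriv β (gevW A ξ v (α+1)) t
        = iteratedDeriv (β+1) (gevW A ξ v α) t
          + iteratedDeriv β
            (fun t => (Complex.I*(ξ:ℂ)*((deriv A t:ℝ):ℂ)) * gevW A ξ v α t) t := by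
      rw [gevW_succ]
      have hsplit : (fun t => deriv (gevW A ξ v α) t
          + (Complex.I * (ξ:ℂ) * ((deriv A t : ℝ):ℂ)) * gevW A ξ v α t)
          = (deriv (gevW A ξ v α))
            + (fun t => (Complex.I * (ξ:ℂ) * ((deriv A t:ℝ):ℂ)) * gevW A ξ v α t) := rfl
      rw [hsplit, ← iteratedDerivWithin_univ, iteratedDerivWithin_add (hx := Set.mem_univ t)
        (h := uniqueDiffOn_univ) ((hwd.contDiffOn.of_le hβ) t (Set.mem_univ t))
        (((hB.mul (hw α)).contDiffOn.of_le hβ) t (Set.mem_univ t)), iteratedDerivWithin_univ,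
        iteratedDerivWithin_univ, ← iteratedDeriv_succ']
    rw [heq]
    -- Leibniz bound for the product term
    have hmul : ‖iteratedDeriv β
          (fun t => (Complex.I*(ξ:ℂ)*((deriv A t:ℝ):ℂ)) * gevW A ξ v α t) t‖
        ≤ ∑ j ∈ range (β+1), (β.choose j : ℝ)
            * ‖iteratedDeriv j (fun t => Complex.I*(ξ:ℂ)*((deriv A t:ℝ):ℂ)) t‖
            * ‖iteratedDeriv (β-j) (gevW A ξ v α) t‖ := by
      have h := norm_iteratedFDeriv_mul_le (𝕜 := ℝ)
        (f := fun t => Complex.I*(ξ:ℂ)*((deriv A t:ℝ):ℂ)) (g := gevW A ξ v α)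
        hB (hw α) t hβ
      simp_rw [norm_iteratedFDeriv_eq_norm_iteratedDeriv] at h
      exact h
    -- notation
    set T : ℝ := ∑ k ∈ range (α+1), (α.choose k : ℝ) * X^k * ((α+β-k).factorial : ℝ)^s
      with hTdef
    set S' : ℝ := ∑ k ∈ range (α+1+1), ((α+1).choose k : ℝ) * X^k
      * ((α+1+β-k).factorial : ℝ)^s with hS'def
    have hterm : ∀ (a c k : ℕ), (0:ℝ) ≤ (a:ℝ) * X^k * ((c.factorial:ℝ))^s := fun a c k =>
      mul_nonneg (mul_nonneg (Nat.cast_nonneg _) (pow_nonneg hX _))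
        (Real.rpow_nonneg (Nat.cast_nonneg _) _)
    have hTnn : 0 ≤ T := Finset.sum_nonneg fun k _ => hterm _ _ _
    have hS'nn : 0 ≤ S' := Finset.sum_nonneg fun k _ => hterm _ _ _
    clear_value T S'
    -- Step A : first term
    have hS1 : ∑ k ∈ range (α+1), (α.choose k : ℝ) * X^k * ((α+(β+1)-k).factorial : ℝ)^s
        ≤ S' := by
      rw [hS'def]
      refine le_trans (Finset.sum_le_sum ?_)
        (Finset.sum_le_sum_of_subset_of_nonneg
          (Finset.range_subset_range.mpr (by omega)) fun k _ _ => hterm _ _ _)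
      intro k hk
      have hk' : k ≤ α := Nat.lt_succ_iff.mp (mem_range.mp hk)
      have hidx : α + (β+1) - k = α+1+β-k := by omega
      rw [hidx]
      have hch : ((α.choose k : ℕ):ℝ) ≤ (((α+1).choose k : ℕ):ℝ) := by
        exact_mod_cast Nat.choose_le_choose k (Nat.le_succ α)
      exact mul_le_mul_of_nonneg_right (mul_le_mul_of_nonneg_right hch (pow_nonneg hX _))
        (Real.rpow_nonneg (Nat.cast_nonneg _) _)
    have hstepA : ‖iteratedDeriv (β+1) (gevW A ξ v α) t‖ ≤ C₀*D*K^(β+1)*H^α*S' :=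
      (ih (β+1) t).trans (by
        have h0 : (0:ℝ) ≤ C₀*D*K^(β+1)*H^α := by positivity
        exact mul_le_mul_of_nonneg_left hS1 h0)
    -- Step B : product term
    -- key1 : combinatorial estimate
    have key1 : ∀ j ∈ range (β+1),
        (β.choose j : ℝ) * ((j+1).factorial : ℝ)^s
          * (∑ k ∈ range (α+1), (α.choose k : ℝ) * X^k * ((α+(β-j)-k).factorial : ℝ)^s)
        ≤ ((j+1 : ℕ):ℝ)^s * T := by
      intro j hj
      have hjβ : j ≤ β := Nat.lt_succ_iff.mp (mem_range.mp hj)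
      rw [hTdef, Finset.mul_sum, Finset.mul_sum]
      refine Finset.sum_le_sum ?_
      intro k hk
      have hkα : k ≤ α := Nat.lt_succ_iff.mp (mem_range.mp hk)
      have hβm : β ≤ α+β-k := by omega
      have hidx : α+(β-j)-k = (α+β-k) - j := by omega
      rw [hidx]
      have hfact : ((j+1).factorial:ℝ)^s * (((α+β-k)-j).factorial:ℝ)^s
          = ((j+1 : ℕ):ℝ)^s * ((j.factorial*((α+β-k)-j).factorial : ℕ):ℝ)^s := by
        rw [← Real.mul_rpow (by positivity) (by positivity),
          ← Real.mul_rpow (by positivity) (by positivity)]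
        congr 1
        push_cast [Nat.factorial_succ]
        ring
      have hgf := gev_fact s hs hjβ hβm
      calc (β.choose j : ℝ) * ((j+1).factorial : ℝ)^s
            * ((α.choose k : ℝ) * X^k * (((α+β-k)-j).factorial : ℝ)^s)
          = ((α.choose k : ℝ) * X^k)
            * (((j+1).factorial : ℝ)^s * (((α+β-k)-j).factorial:ℝ)^s * (β.choose j : ℝ)) := by
            ring
        _ = ((α.choose k : ℝ) * X^k) * (((j+1 : ℕ):ℝ)^s
            * ((β.choose j : ℝ) * ((j.factorial*((α+β-k)-j).factorial : ℕ):ℝ)^s)) := by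
            rw [hfact]; ring
        _ ≤ ((α.choose k : ℝ) * X^k) * (((j+1 : ℕ):ℝ)^s * ((α+β-k).factorial : ℝ)^s) := by
            refine mul_le_mul_of_nonneg_left ?_
              (mul_nonneg (Nat.cast_nonneg _) (pow_nonneg hX _))
            exact mul_le_mul_of_nonneg_left hgf (Real.rpow_nonneg (by positivity) _)
        _ = ((j+1 : ℕ):ℝ)^s * ((α.choose k : ℝ) * X^k * ((α+β-k).factorial : ℝ)^s) := by
            ring
    -- key2 : geometric rearrangement
    have key2 : ∀ j ∈ range (β+1), hA'^(j+1)*K^(β-j) = hA' * K^β * (hA'/K)^j := by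
      intro j hj
      have hjβ : j ≤ β := Nat.lt_succ_iff.mp (mem_range.mp hj)
      have hKβ : K^β = K^j * K^(β-j) := by rw [← pow_add]; congr 1; omega
      rw [hKβ, div_pow]
      field_simp
      ring
    -- b4 : absorb one power of X
    have hb4 : X * T ≤ S' := by
      rw [hTdef, hS'def, Finset.mul_sum]
      rw [Finset.sum_range_succ' (fun k => ((α+1).choose k : ℝ) * X^k
        * ((α+1+β-k).factorial : ℝ)^s) (α+1)]
      refine le_add_of_le_of_nonneg (Finset.sum_le_sum ?_) (hterm _ _ _)
      intro k hk
      have hkα : k ≤ α := Nat.lt_succ_iff.mp (mem_range.mp hk)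
      have hidx : α+1+β-(k+1) = α+β-k := by omega
      have hch : ((α.choose k : ℕ):ℝ) ≤ (((α+1).choose (k+1) : ℕ):ℝ) := by
        have := Nat.choose_succ_succ α k
        exact_mod_cast this ▸ Nat.le_add_right _ _
      calc X * ((α.choose k : ℝ) * X^k * ((α+β-k).factorial : ℝ)^s)
          = (α.choose k : ℝ) * X^(k+1) * ((α+β-k).factorial : ℝ)^s := by ring
        _ ≤ ((α+1).choose (k+1) : ℝ) * X^(k+1) * ((α+1+β-(k+1)).factorial : ℝ)^s := by
            rw [hidx]
            exact mul_le_mul_of_nonneg_right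
              (mul_le_mul_of_nonneg_right hch (pow_nonneg hX _))
              (Real.rpow_nonneg (Nat.cast_nonneg _) _)
    -- assemble step B
    have hstepB : ∑ j ∈ range (β+1), (β.choose j : ℝ)
          * ‖iteratedDeriv j (fun t => Complex.I*(ξ:ℂ)*((deriv A t:ℝ):ℂ)) t‖
          * ‖iteratedDeriv (β-j) (gevW A ξ v α) t‖
        ≤ C₀*D*K^β*H^α*((2*CA*hA')*S') := by
      have hb1 : ∀ j ∈ range (β+1), (β.choose j : ℝ)
            * ‖iteratedDeriv j (fun t => Complex.I*(ξ:ℂ)*((deriv A t:ℝ):ℂ)) t‖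
            * ‖iteratedDeriv (β-j) (gevW A ξ v α) t‖
          ≤ (C₀*D*H^α*CA*(hA'*K^β)) * ((hA'/K)^j * ((j+1 : ℕ):ℝ)^s) * (X*T) := by
        intro j hj
        have h1 := gevB_norm hA s CA hA' hAG ξ j t
        have h2 := ih (β-j) t
        calc (β.choose j : ℝ)
              * ‖iteratedDeriv j (fun t => Complex.I*(ξ:ℂ)*((deriv A t:ℝ):ℂ)) t‖
              * ‖iteratedDeriv (β-j) (gevW A ξ v α) t‖
            ≤ (β.choose j : ℝ) * (X * (CA * hA'^(j+1) * ((j+1).factorial : ℝ)^s))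
              * (C₀*D*K^(β-j)*H^α* ∑ k ∈ range (α+1),
                  (α.choose k : ℝ) * X^k * ((α+(β-j)-k).factorial : ℝ)^s) := by
              have hn1 : (0:ℝ) ≤ (β.choose j : ℝ) := Nat.cast_nonneg _
              exact mul_le_mul (mul_le_mul_of_nonneg_left h1 hn1) h2 (norm_nonneg _)
                (by positivity)
          _ = (C₀*D*H^α*CA*X) * (hA'^(j+1)*K^(β-j))
              * ((β.choose j : ℝ) * ((j+1).factorial : ℝ)^s
                * (∑ k ∈ range (α+1), (α.choose k : ℝ) * X^k
                    * ((α+(β-j)-k).factorial : ℝ)^s)) := by ring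
          _ ≤ (C₀*D*H^α*CA*X) * (hA'^(j+1)*K^(β-j)) * (((j+1 : ℕ):ℝ)^s * T) := by
              refine mul_le_mul_of_nonneg_left (key1 j hj) ?_
              have : (0:ℝ) ≤ C₀*D*H^α*CA*X := by positivity
              positivity
          _ = (C₀*D*H^α*CA*(hA'*K^β)) * ((hA'/K)^j * ((j+1 : ℕ):ℝ)^s) * (X*T) := by
              rw [key2 j hj]; ring
      calc ∑ j ∈ range (β+1), (β.choose j : ℝ)
            * ‖iteratedDeriv j (fun t => Complex.I*(ξ:ℂ)*((deriv A t:ℝ):ℂ)) t‖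
            * ‖iteratedDeriv (β-j) (gevW A ξ v α) t‖
          ≤ ∑ j ∈ range (β+1),
              (C₀*D*H^α*CA*(hA'*K^β)) * ((hA'/K)^j * ((j+1 : ℕ):ℝ)^s) * (X*T) :=
            Finset.sum_le_sum hb1
        _ = ((C₀*D*H^α*CA*(hA'*K^β)) * (X*T))
            * (∑ j ∈ range (β+1), (hA'/K)^j * ((j+1 : ℕ):ℝ)^s) := by
            rw [Finset.mul_sum]
            refine Finset.sum_congr rfl fun j _ => by ring
        _ ≤ ((C₀*D*H^α*CA*(hA'*K^β)) * (X*T)) * 2 := by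
            refine mul_le_mul_of_nonneg_left (hgeo (β+1)) ?_
            have hXT : 0 ≤ X*T := mul_nonneg hX hTnn
            positivity
        _ = (C₀*D*K^β*H^α*(2*CA*hA')) * (X*T) := by ring
        _ ≤ (C₀*D*K^β*H^α*(2*CA*hA')) * S' := by
            refine mul_le_mul_of_nonneg_left hb4 (by positivity)
        _ = C₀*D*K^β*H^α*((2*CA*hA')*S') := by ring
    -- final assembly
    calc ‖iteratedDeriv (β+1) (gevW A ξ v α) t
          + iteratedDeriv β
            (fun t => (Complex.I*(ξ:ℂ)*((deriv A t:ℝ):ℂ)) * gevW A ξ v α t) t‖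
        ≤ ‖iteratedDeriv (β+1) (gevW A ξ v α) t‖
          + ‖iteratedDeriv β
            (fun t => (Complex.I*(ξ:ℂ)*((deriv A t:ℝ):ℂ)) * gevW A ξ v α t) t‖ :=
          norm_add_le _ _
      _ ≤ C₀*D*K^(β+1)*H^α*S' + C₀*D*K^β*H^α*((2*CA*hA')*S') :=
          add_le_add hstepA (hmul.trans hstepB)
      _ = C₀*D*K^β*H^(α+1)*S' := by rw [hH, pow_succ, pow_succ]; ring

end

/-- Key estimate of Proposition 3.1: multiplication of Fourier coefficients by the
oscillatory factor `e^{iξA(t)}` preserves Gevrey-type decay.  If `A` satisfies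
Gevrey-`s` bounds and the family `v_ξ` satisfies
`|v_ξ^{(β)}(t)| ≤ C₀ h₀^β (β!)^s e^{-ε₀|ξ|^{1/s}}`, then there are `C, h > 0` with
`|dᵅ/dtᵅ (v_ξ(t) e^{iξA(t)})| ≤ C h^α (α!)^s e^{-(ε₀/2)|ξ|^{1/s}}`. -/
theorem stmt_5 (s : ℝ) (hs : 1 < s) (A : ℝ → ℝ) (hA : ContDiff ℝ (⊤ : ℕ∞) A)
    (CA hA' : ℝ) (hCA : 0 < CA) (hhA : 0 < hA')
    (hAG : ∀ (t : ℝ) (ℓ : ℕ),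
      |iteratedDeriv ℓ A t| ≤ CA * hA' ^ ℓ * (Nat.factorial ℓ : ℝ) ^ s)
    (C₀ h₀ ε₀ : ℝ) (hC₀ : 0 < C₀) (hh₀ : 0 < h₀) (hε₀ : 0 < ε₀)
    (v : ℤ → ℝ → ℂ) (hv : ∀ ξ : ℤ, ContDiff ℝ (⊤ : ℕ∞) (v ξ))
    (hvG : ∀ (t : ℝ) (β : ℕ) (ξ : ℤ),
      ‖iteratedDeriv β (v ξ) t‖ ≤
        C₀ * h₀ ^ β * (Nat.factorial β : ℝ) ^ s * Real.exp (-ε₀ * |(ξ : ℝ)| ^ (1 / s))) :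
    ∃ C : ℝ, 0 < C ∧ ∃ h : ℝ, 0 < h ∧ ∀ (t : ℝ) (α : ℕ) (ξ : ℤ),
      ‖iteratedDeriv α
        (fun τ : ℝ => v ξ τ * Complex.exp (Complex.I * (ξ : ℂ) * (A τ : ℂ))) t‖ ≤
      C * h ^ α * (Nat.factorial α : ℝ) ^ s * Real.exp (-(ε₀ / 2) * |(ξ : ℝ)| ^ (1 / s)) := by
  have hs1 : (1:ℝ) ≤ s := hs.le
  have hs0 : (0:ℝ) < s := lt_of_lt_of_le one_pos hs1
  have hAsm : ContDiff ℝ ∞ A := hA.of_le (by simp)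
  set K := max h₀ ((2:ℝ)^s * hA' * 2) with hKdef
  have hK : 0 < K := lt_of_lt_of_le hh₀ (le_max_left _ _)
  set H := K + 2*CA*hA' with hHdef
  have hH0 : 0 < H := by
    have h2 : (0:ℝ) < 2*CA*hA' := by positivity
    linarith
  set r := (s/(ε₀/2))^s with hrdef
  have hr : 0 ≤ r := Real.rpow_nonneg (by positivity) _
  set R := max 1 r with hRdef
  have hR1 : (1:ℝ) ≤ R := le_max_left _ _
  refine ⟨C₀, hC₀, H*(2*R), by nlinarith, ?_⟩
  intro t α ξ
  have hvsm : ContDiff ℝ ∞ (v ξ) := (hv ξ).of_le (by simp)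
  set X := |(ξ:ℝ)| with hXdef
  have hX : 0 ≤ X := abs_nonneg _
  set D := Real.exp (-ε₀ * X^(1/s)) with hDdef
  have hD : 0 ≤ D := Real.exp_nonneg _
  have hgeo : ∀ n : ℕ, ∑ j ∈ Finset.range n, (hA'/K)^j * ((j+1 : ℕ):ℝ)^s ≤ 2 := by
    intro n
    have hhalf : hA'/K * (2:ℝ)^s ≤ 1/2 := by
      have h2s : (0:ℝ) < (2:ℝ)^s := Real.rpow_pos_of_pos two_pos _
      have hKge : (2:ℝ)^s * hA' * 2 ≤ K := le_max_right _ _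
      rw [div_mul_eq_mul_div, div_le_div_iff₀ hK (by norm_num)]
      nlinarith
    calc ∑ j ∈ Finset.range n, (hA'/K)^j * ((j+1 : ℕ):ℝ)^s
        ≤ ∑ j ∈ Finset.range n, ((1:ℝ)/2)^j := by
          refine Finset.sum_le_sum fun j _ => ?_
          have h1 : ((j+1 : ℕ):ℝ)^s ≤ ((2:ℝ)^j)^s := by
            apply Real.rpow_le_rpow (by positivity) ?_ hs0.le
            have := Nat.lt_two_pow_self (n := j)
            push_cast
            exact_mod_cast this
          have h2 : (0:ℝ) ≤ hA'/K := by positivity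
          calc (hA'/K)^j * ((j+1 : ℕ):ℝ)^s
              ≤ (hA'/K)^j * ((2:ℝ)^s)^j := by
                exact mul_le_mul_of_nonneg_left
                  (h1.trans_eq (rpow_nat_comm (by norm_num) s j)) (pow_nonneg h2 j)
            _ = ((hA'/K) * (2:ℝ)^s)^j := by rw [mul_pow]
            _ ≤ ((1:ℝ)/2)^j := pow_le_pow_left₀ (by positivity) hhalf j
      _ ≤ 2 := gev_geom n
  have hvb : ∀ (τ : ℝ) (β : ℕ),
      ‖iteratedDeriv β (v ξ) τ‖ ≤ C₀ * K ^ β * (β.factorial:ℝ)^s * D := by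
    intro τ β
    have h := hvG τ β ξ
    refine h.trans ?_
    have hpw : h₀^β ≤ K^β := pow_le_pow_left₀ hh₀.le (le_max_left _ _) β
    rw [hDdef, hXdef]
    have hfs : (0:ℝ) ≤ (β.factorial:ℝ)^s := Real.rpow_nonneg (by positivity) _
    have he : (0:ℝ) ≤ Real.exp (-ε₀ * |(ξ:ℝ)|^(1/s)) := Real.exp_nonneg _
    exact mul_le_mul_of_nonneg_right
      (mul_le_mul_of_nonneg_right (mul_le_mul_of_nonneg_left hpw hC₀.le) hfs) he
  have hb := gevW_bound s hs1 hAsm CA hA' hCA hhA hAG C₀ hC₀.le D hD K hK hgeo H rfl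
    hvsm ξ hvb α 0 t
  simp only [Nat.add_zero, pow_zero, mul_one] at hb
  have hrep := gevW_repr hAsm hvsm ξ α
  have hexp2 : (0:ℝ) ≤ Real.exp ((ε₀/2) * X^(1/s)) := Real.exp_nonneg _
  have hfa : (0:ℝ) ≤ (α.factorial:ℝ)^s := Real.rpow_nonneg (by positivity) _
  have hsum : ∑ k ∈ Finset.range (α+1), (α.choose k:ℝ) * X^k * ((α-k).factorial:ℝ)^s
      ≤ ((α+1:ℕ):ℝ) * (R^α * Real.exp ((ε₀/2)*X^(1/s)) * (α.factorial:ℝ)^s) := by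
    have hcard := Finset.sum_le_card_nsmul (Finset.range (α+1))
      (fun k => (α.choose k:ℝ) * X^k * ((α-k).factorial:ℝ)^s)
      (R^α * Real.exp ((ε₀/2)*X^(1/s)) * (α.factorial:ℝ)^s) ?_
    · simpa [Finset.card_range, nsmul_eq_mul] using hcard
    intro k hk
    have hkα : k ≤ α := Nat.lt_succ_iff.mp (Finset.mem_range.mp hk)
    have haux := gev_aux2 s (ε₀/2) hs1 (by positivity) k X hX
    rw [← hrdef] at haux
    have hRk : r^k ≤ R^α :=
      (pow_le_pow_left₀ hr (le_max_right 1 r) k).trans (pow_le_pow_right₀ hR1 hkα)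
    have hgf : (α.choose k:ℝ) * ((k.factorial:ℝ)^s * ((α-k).factorial:ℝ)^s)
        ≤ (α.factorial:ℝ)^s := by
      have := gev_fact s hs1 hkα (le_refl α)
      rw [← Real.mul_rpow (by positivity) (by positivity)]
      push_cast at this ⊢
      exact this
    calc (α.choose k:ℝ) * X^k * ((α-k).factorial:ℝ)^s
        ≤ (α.choose k:ℝ) * ((k.factorial:ℝ)^s * r^k * Real.exp ((ε₀/2)*X^(1/s)))
          * ((α-k).factorial:ℝ)^s := by
          refine mul_le_mul_of_nonneg_right
            (mul_le_mul_of_nonneg_left haux (Nat.cast_nonneg _))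
            (Real.rpow_nonneg (by positivity) _)
      _ = (r^k * Real.exp ((ε₀/2)*X^(1/s)))
          * ((α.choose k:ℝ) * ((k.factorial:ℝ)^s * ((α-k).factorial:ℝ)^s)) := by ring
      _ ≤ (R^α * Real.exp ((ε₀/2)*X^(1/s))) * (α.factorial:ℝ)^s := by
          refine mul_le_mul ?_ hgf ?_ ?_
          · exact mul_le_mul_of_nonneg_right hRk hexp2
          · positivity
          · positivity
      _ = R^α * Real.exp ((ε₀/2)*X^(1/s)) * (α.factorial:ℝ)^s := by ring
  have hα2 : ((α+1:ℕ):ℝ) ≤ (2:ℝ)^α := by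
    have := Nat.lt_two_pow_self (n := α)
    push_cast
    exact_mod_cast this
  calc ‖iteratedDeriv α
        (fun τ : ℝ => v ξ τ * Complex.exp (Complex.I * (ξ:ℂ) * (A τ:ℂ))) t‖
      = ‖gevW A ξ (v ξ) α t * Complex.exp (Complex.I*(ξ:ℂ)*(A t:ℂ))‖ := by
        rw [hrep]
    _ = ‖gevW A ξ (v ξ) α t‖ := by
        rw [norm_mul, Complex.norm_exp]
        have hre : (Complex.I*(ξ:ℂ)*((A t:ℝ):ℂ)).re = 0 := by simp
        rw [hre, Real.exp_zero, mul_one]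
    _ ≤ C₀ * D * H^α * ∑ k ∈ Finset.range (α+1),
          (α.choose k:ℝ) * X^k * ((α-k).factorial:ℝ)^s := hb
    _ ≤ C₀ * D * H^α * (((α+1:ℕ):ℝ) * (R^α * Real.exp ((ε₀/2)*X^(1/s))
          * (α.factorial:ℝ)^s)) := by
        refine mul_le_mul_of_nonneg_left hsum (by positivity)
    _ ≤ C₀ * D * H^α * ((2:ℝ)^α * (R^α * Real.exp ((ε₀/2)*X^(1/s))
          * (α.factorial:ℝ)^s)) := by
        refine mul_le_mul_of_nonneg_left (mul_le_mul_of_nonneg_right hα2 ?_) (by positivity)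
        positivity
    _ = C₀ * (H*(2*R))^α * (α.factorial:ℝ)^s * (D * Real.exp ((ε₀/2)*X^(1/s))) := by
        rw [mul_pow, mul_pow]
        ring
    _ = C₀ * (H*(2*R))^α * (α.factorial:ℝ)^s * Real.exp (-(ε₀/2) * X^(1/s)) := by
        rw [hDdef, ← Real.exp_add]
        congr 1
        ring
end

section
/- Let a₀ ∈ ℝ, let b : ℝ → ℝ be a continuous 2π-periodic function with mean b₀ = (1/2π)∫₀^{2π} b(y) dy, set c₀ = a₀ + i·b₀, and let ξ ∈ ℤ be such that e^{−2πi·ξ·c₀} ≠ 1. Let g : ℝ → ℂ be a continuous 2π-periodic function. Define H(t, τ) = a₀·τ + i·∫_{t−τ}^{t} b(y) dy and u(t) = (1 − e^{−2πi·ξ·c₀})^{−1} · ∫₀^{2π} e^{−i·ξ·H(t, τ)} · g(t − τ) dτ. Then u is 2π-periodic, continuously differentiable, satisfies u′(t) + i·ξ·(a₀ + i·b(t))·u(t) = g(t) for all t ∈ ℝ, and u is the unique 2π-periodic C¹ solution of this equation. -/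
/-! Writing `p t = iξ(a₀ + i b t)`, the integrating factor `E t = exp (∫₀ᵗ p)` turns `u' + p u = g`
into `(E u)' = E g`. Periodicity of `p` gives `E (t - T) = q E t` with `q = exp (-∫₀ᵀ p) = e^{-2πiξc₀}`,
and variation of constants over one period produces the formula. The condition `q ≠ 1` is what
makes it work: a periodic solution `w` of the homogeneous equation has `E w` constant, so
`w 0 = E T * w T = q⁻¹ * w 0`, whence `w = 0`. -/

open Real Function intervalIntegral
open scoped Complex

noncomputable def periodicSolution (p g : ℝ → ℂ) (T : ℝ) (t : ℝ) : ℂ :=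
  (1 - cexp (-∫ s in 0..T, p s))⁻¹ * ∫ τ in 0..T, cexp (-∫ s in t - τ..t, p s) * g (t - τ)

section PeriodicLinearODE

variable {p g : ℝ → ℂ} {T : ℝ}

lemma hasDerivAt_cexp_integral (hp : Continuous p) (t : ℝ) :
    HasDerivAt (fun t => cexp (∫ s in 0..t, p s)) (p t * cexp (∫ s in 0..t, p s)) t :=
  (hp.integral_hasStrictDerivAt 0 t).hasDerivAt.cexp.congr_deriv (mul_comm _ _)

lemma integral_sub_eq_sub_integral (hp : Continuous p) (t τ : ℝ) :
    ∫ s in t - τ..t, p s = (∫ s in 0..t, p s) - ∫ s in 0..t - τ, p s :=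
  (integral_interval_sub_left (hp.intervalIntegrable _ _) (hp.intervalIntegrable _ _)).symm

lemma cexp_integral_sub_period (hp : Continuous p) (hper : Periodic p T) (t : ℝ) :
    cexp (∫ s in 0..t - T, p s) = cexp (-∫ s in 0..T, p s) * cexp (∫ s in 0..t, p s) := by
  have hshift : ∫ s in t - T..t, p s = ∫ s in 0..T, p s := by
    simpa using hper.intervalIntegral_add_eq (t - T) 0
  rw [← Complex.exp_add, ← hshift, integral_sub_eq_sub_integral hp]
  ring_nf

lemma periodicSolution_eq_integratingFactor (hp : Continuous p) (t : ℝ) :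
    periodicSolution p g T t = (1 - cexp (-∫ s in 0..T, p s))⁻¹ *
      (cexp (-∫ s in 0..t, p s) * ∫ s in t - T..t, cexp (∫ r in 0..s, p r) * g s) := by
  have hkernel : ∀ τ, cexp (-∫ s in t - τ..t, p s) * g (t - τ) =
      cexp (-∫ s in 0..t, p s) * (cexp (∫ r in 0..t - τ, p r) * g (t - τ)) := fun τ => by
    rw [integral_sub_eq_sub_integral hp, ← mul_assoc, ← Complex.exp_add]
    ring_nf
  rw [periodicSolution]
  simp only [hkernel]
  rw [integral_const_mul,
    integral_comp_sub_left (fun s => cexp (∫ r in 0..s, p r) * g s), sub_zero]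

lemma periodicSolution_periodic (hp : Periodic p T) (hg : Periodic g T) :
    Periodic (periodicSolution p g T) T := fun t => by
  have hshift (τ : ℝ) : ∫ s in t + T - τ..t + T, p s = ∫ s in t - τ..t, p s := by
    rw [show t + T - τ = t - τ + T by ring, ← integral_comp_add_right]
    exact integral_congr fun x _ => hp x
  have hgshift (τ : ℝ) : g (t + T - τ) = g (t - τ) := by
    rw [show t + T - τ = t - τ + T by ring, hg]
  simp only [periodicSolution, hshift, hgshift]

lemma hasDerivAt_periodicSolution (hp : Continuous p) (hg : Continuous g)
    (hpT : Periodic p T) (hgT : Periodic g T) (hq : cexp (-∫ s in 0..T, p s) ≠ 1) (t : ℝ) :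
    HasDerivAt (periodicSolution p g T) (g t - p t * periodicSolution p g T t) t := by
  set q := cexp (-∫ s in 0..T, p s)
  set E := fun t => cexp (∫ s in 0..t, p s)
  have hEg : Continuous fun s => E s * g s := by fun_prop
  have hF : HasDerivAt (fun t => ∫ s in t - T..t, E s * g s)
      (E t * g t - E (t - T) * g (t - T)) t := by
    have h := (hEg.integral_hasStrictDerivAt 0 t).hasDerivAt.sub
      ((hEg.integral_hasStrictDerivAt 0 (t - T)).hasDerivAt.comp_sub_const t T)
    exact h.congr_of_eventuallyEq (Filter.Eventually.of_forall fun x =>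
      (integral_interval_sub_left (hEg.intervalIntegrable _ _) (hEg.intervalIntegrable _ _)).symm)
  have hexp : HasDerivAt (fun t => cexp (-∫ s in 0..t, p s))
      (-p t * cexp (-∫ s in 0..t, p s)) t :=
    ((hp.integral_hasStrictDerivAt 0 t).hasDerivAt.neg).cexp.congr_deriv (mul_comm _ _)
  rw [funext fun t => periodicSolution_eq_integratingFactor (g := g) (T := T) hp t]
  refine ((hexp.mul hF).const_mul (1 - q)⁻¹).congr_deriv ?_
  have hET : E (t - T) = q * E t := cexp_integral_sub_period hp hpT t
  have hEE : cexp (-∫ s in 0..t, p s) * E t = 1 := by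
    rw [← Complex.exp_add, neg_add_cancel, Complex.exp_zero]
  have hq' : (1 - q)⁻¹ * (1 - q) = 1 := inv_mul_cancel₀ (sub_ne_zero_of_ne (Ne.symm hq))
  -- `E (t - T) g (t - T) = q E t g t`: the two boundary terms combine to `(1 - q) E t g t`
  rw [hET, show t - T = t + -T by ring, hgT.neg t]
  linear_combination ((1 - q)⁻¹ * (1 - q) * g t) * hEE + g t * hq'

lemma contDiff_one_periodicSolution (hp : Continuous p) (hg : Continuous g)
    (hpT : Periodic p T) (hgT : Periodic g T) (hq : cexp (-∫ s in 0..T, p s) ≠ 1) :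
    ContDiff ℝ 1 (periodicSolution p g T) := by
  have hu := hasDerivAt_periodicSolution hp hg hpT hgT hq
  have hdiff : Differentiable ℝ (periodicSolution p g T) := fun t => (hu t).differentiableAt
  refine contDiff_one_iff_deriv.mpr ⟨hdiff, ?_⟩
  rw [funext fun t => (hu t).deriv]
  exact hg.sub (hp.mul hdiff.continuous)

lemma eq_zero_of_hasDerivAt_neg_mul (hp : Continuous p) (hq : cexp (-∫ s in 0..T, p s) ≠ 1)
    {w : ℝ → ℂ} (hw : ∀ t, HasDerivAt w (-p t * w t) t) (hwT : w T = w 0) : w = 0 := by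
  set E := fun t => cexp (∫ s in 0..t, p s)
  have hW : ∀ t, HasDerivAt (fun t => E t * w t) 0 t := fun t =>
    ((hasDerivAt_cexp_integral hp t).mul (hw t)).congr_deriv (by ring)
  have hconst : ∀ t, E t * w t = w 0 := fun t => by
    simpa [E] using is_const_of_deriv_eq_zero (fun t => (hW t).differentiableAt)
      (fun t => (hW t).deriv) t 0
  have hw0 : w 0 = 0 := by
    have h := hconst T
    rw [hwT] at h
    have hET : E T ≠ 1 := fun h1 => hq (by rw [Complex.exp_neg]; exact inv_eq_one.mpr h1)
    exact (mul_eq_zero.mp (by linear_combination h : (E T - 1) * w 0 = 0)).resolve_left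
      (sub_ne_zero.mpr hET)
  funext t
  exact (mul_eq_zero.mp ((hconst t).trans hw0)).resolve_left (Complex.exp_ne_zero _)

lemma eq_periodicSolution (hp : Continuous p) (hg : Continuous g)
    (hpT : Periodic p T) (hgT : Periodic g T) (hq : cexp (-∫ s in 0..T, p s) ≠ 1)
    {v : ℝ → ℂ} (hvT : Periodic v T) (hv : Differentiable ℝ v)
    (hode : ∀ t, deriv v t + p t * v t = g t) : v = periodicSolution p g T := by
  have hu := hasDerivAt_periodicSolution hp hg hpT hgT hq
  have hw : ∀ t, HasDerivAt (fun t => v t - periodicSolution p g T t)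
      (-p t * (v t - periodicSolution p g T t)) t := fun t =>
    ((hv t).hasDerivAt.sub (hu t)).congr_deriv (by linear_combination hode t)
  have hwT : v T - periodicSolution p g T T = v 0 - periodicSolution p g T 0 := by
    have hv0 := hvT 0
    have hu0 := periodicSolution_periodic hpT hgT 0
    rw [zero_add] at hv0 hu0
    rw [hv0, hu0]
  funext t
  exact sub_eq_zero.mp (congrFun (eq_zero_of_hasDerivAt_neg_mul hp hq hw hwT) t)

end PeriodicLinearODE

lemma integral_I_mul_add_I_mul_ofReal (a₀ ξ : ℂ) {b : ℝ → ℝ} {x y : ℝ}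
    (hb : IntervalIntegrable b MeasureTheory.volume x y) :
    ∫ s in x..y, Complex.I * ξ * (a₀ + Complex.I * b s) =
      Complex.I * ξ * (a₀ * ((y - x : ℝ) : ℂ) + Complex.I * ((∫ s in x..y, b s : ℝ) : ℂ)) := by
  have hb' : IntervalIntegrable (fun s => (b s : ℂ)) MeasureTheory.volume x y :=
    ⟨hb.1.ofReal, hb.2.ofReal⟩
  rw [integral_const_mul, integral_add intervalIntegrable_const (hb'.const_mul _),
    integral_const_mul, integral_ofReal, integral_const, Complex.real_smul, mul_comm a₀]

/-- Explicit solution formula (4.1): with `H(t,τ) = a₀τ + i∫_{t-τ}^t b`, the function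
`u(t) = (1-e^{-2πiξc₀})⁻¹ ∫₀^{2π} e^{-iξH(t,τ)} g(t-τ) dτ` is the unique `2π`-periodic
`C¹` solution of `u' + iξ(a₀ + ib(t))u = g`. -/
theorem stmt_6 (a₀ : ℝ) (b : ℝ → ℝ) (hb : Continuous b)
    (hbper : ∀ t, b (t + 2 * π) = b t)
    (b₀ : ℝ) (hb₀ : b₀ = (1 / (2 * π)) * ∫ y in (0:ℝ)..(2 * π), b y)
    (c₀ : ℂ) (hc₀ : c₀ = (a₀ : ℂ) + Complex.I * (b₀ : ℂ))
    (ξ : ℤ) (hξ : Complex.exp (-(((2 * π : ℝ) : ℂ) * Complex.I * (ξ : ℂ) * c₀)) ≠ 1)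
    (g : ℝ → ℂ) (hg : Continuous g) (hgper : ∀ t, g (t + 2 * π) = g t)
    (u : ℝ → ℂ)
    (hu : ∀ t, u t = (1 - Complex.exp (-(((2 * π : ℝ) : ℂ) * Complex.I * (ξ : ℂ) * c₀)))⁻¹ *
      ∫ τ in (0:ℝ)..(2 * π),
        Complex.exp (-(Complex.I * (ξ : ℂ) *
          (((a₀ * τ : ℝ) : ℂ) + Complex.I * (((∫ y in (t - τ)..t, b y) : ℝ) : ℂ)))) *
        g (t - τ)) :
    (∀ t, u (t + 2 * π) = u t) ∧ ContDiff ℝ 1 u ∧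
    (∀ t, deriv u t + Complex.I * (ξ : ℂ) * ((a₀ : ℂ) + Complex.I * (b t : ℂ)) * u t = g t) ∧
    (∀ v : ℝ → ℂ, (∀ t, v (t + 2 * π) = v t) → ContDiff ℝ 1 v →
      (∀ t, deriv v t + Complex.I * (ξ : ℂ) * ((a₀ : ℂ) + Complex.I * (b t : ℂ)) * v t = g t) →
      v = u) := by
  set p : ℝ → ℂ := fun t => Complex.I * ξ * (a₀ + Complex.I * b t)
  have hp : Continuous p := by fun_prop
  have hpper : Periodic p (2 * π) := fun t => by simp only [p, hbper]
  have hmonodromy : ∫ s in 0..2 * π, p s = ((2 * π : ℝ) : ℂ) * Complex.I * ξ * c₀ := by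
    have hmean : ∫ y in 0..2 * π, b y = 2 * π * b₀ := by
      rw [hb₀]; field_simp
    rw [integral_I_mul_add_I_mul_ofReal _ _ (hb.intervalIntegrable _ _), hmean, hc₀]
    push_cast; ring
  have hq : cexp (-∫ s in 0..2 * π, p s) ≠ 1 := by rwa [hmonodromy]
  have hu_eq : u = periodicSolution p g (2 * π) := funext fun t => by
    have hphase (τ : ℝ) : ∫ s in t - τ..t, p s =
        Complex.I * ξ * (((a₀ * τ : ℝ) : ℂ) + Complex.I * ((∫ y in t - τ..t, b y : ℝ) : ℂ)) := by
      rw [integral_I_mul_add_I_mul_ofReal _ _ (hb.intervalIntegrable _ _)]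
      push_cast; ring
    simp only [hu, periodicSolution, hmonodromy, hphase]
  subst hu_eq
  have hderiv := hasDerivAt_periodicSolution hp hg hpper hgper hq
  refine ⟨periodicSolution_periodic hpper hgper, contDiff_one_periodicSolution hp hg hpper hgper hq,
    fun t => ?_, fun v hvper hv hvode => eq_periodicSolution hp hg hpper hgper hq hvper
      (hv.differentiable one_ne_zero) hvode⟩
  rw [(hderiv t).deriv]
  ring
end

section
/- Define a sequence of positive integers by q₁ = 10^{1!}, q₂ = 10^{2!}·10^{1!} + 1, and q_n = 10^{n!}·q_{n−1} + q_{n−2} for n ≥ 3. Then for every real s ≥ 1 and every ε > 0 there exists N ∈ ℕ such that q_n^{n+3} ≤ e^{ε·q_{n−1}^{1/s}} for all n ≥ N. In particular, the sequences n·(n!)·(10^{(n−1)!/s})^{−1} and (n!)·(10^{(n−1)!/s})^{−1} tend to 0 as n → ∞. -/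
/-!
The recurrence gives `10 ^ n! ≤ q n ≤ 10 ^ (2 n!)`, so `log (q n ^ (n + 3))` is `O(n · n!)`,
while `q (n - 1) ^ (1 / s) ≥ c ^ (n - 1)!` with `c = 10 ^ (1 / s) > 1`. Since `n ≤ (n - 1)!`
for `n ≥ 4`, the ratio `n · n! / c ^ (n - 1)!` is at most `k ^ 3 / c ^ k` with `k = (n - 1)!`,
which tends to `0`.
-/

open Filter Topology Real
open scoped Nat

section Continuant

variable {b : ℕ} {q : ℕ → ℕ}

theorem pow_factorial_le_of_continuant (hb : 1 ≤ b) (hq1 : q 1 = b ^ 1 !)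
    (hq2 : q 2 = b ^ 2 ! * b ^ 1 ! + 1)
    (hqrec : ∀ n, 3 ≤ n → q n = b ^ n ! * q (n - 1) + q (n - 2)) {n : ℕ} (hn : 1 ≤ n) :
    b ^ n ! ≤ q n := by
  obtain ⟨m, rfl⟩ := Nat.exists_eq_add_of_le' hn
  induction m using Nat.twoStepInduction with
  | zero => simp [hq1]
  | one => rw [hq2]; exact Nat.le_add_right_of_le (Nat.le_mul_of_pos_right _ (by positivity))
  | more m _ ih =>
    have hpos : 0 < q (m + 2) := lt_of_lt_of_le (by positivity) (ih (by omega))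
    rw [hqrec (m + 2 + 1) (by omega)]
    exact Nat.le_add_right_of_le (Nat.le_mul_of_pos_right _ hpos)

theorem le_pow_two_mul_factorial_of_continuant (hb : 2 ≤ b) (hq1 : q 1 = b ^ 1 !)
    (hq2 : q 2 = b ^ 2 ! * b ^ 1 ! + 1)
    (hqrec : ∀ n, 3 ≤ n → q n = b ^ n ! * q (n - 1) + q (n - 2)) {n : ℕ} (hn : 1 ≤ n) :
    q n ≤ b ^ (2 * n !) := by
  obtain ⟨m, rfl⟩ := Nat.exists_eq_add_of_le' hn
  induction m using Nat.twoStepInduction with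
  | zero => simpa [hq1] using Nat.le_self_pow two_ne_zero b
  | one =>
    rw [hq2]
    simp only [Nat.factorial, ← pow_add]
    calc b ^ 3 + 1 ≤ 2 * b ^ 3 := by have := Nat.one_le_pow 3 b (by omega); omega
      _ ≤ b * b ^ 3 := Nat.mul_le_mul_right _ hb
      _ = b ^ (2 * 2) := by ring
  | more m ih₁ ih₂ =>
    have hfac : 2 * (m + 2)! + 1 ≤ (m + 3)! := by
      rw [Nat.factorial_succ (m + 2)]; nlinarith [Nat.factorial_pos (m + 2)]
    have hsmall : b ^ (2 * (m + 1)!) ≤ b ^ ((m + 3)! + 2 * (m + 2)!) :=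
      Nat.pow_le_pow_right (by omega) (by nlinarith [Nat.factorial_le (Nat.le_succ (m + 1))])
    rw [hqrec (m + 2 + 1) (by omega)]
    calc b ^ (m + 3)! * q (m + 2) + q (m + 1)
        ≤ b ^ (m + 3)! * b ^ (2 * (m + 2)!) + b ^ (2 * (m + 1)!) := by
          gcongr
          exacts [ih₂ (by omega), ih₁ (by omega)]
      _ ≤ 2 * b ^ ((m + 3)! + 2 * (m + 2)!) := by rw [← pow_add]; omega
      _ ≤ b * b ^ ((m + 3)! + 2 * (m + 2)!) := Nat.mul_le_mul_right _ hb
      _ = b ^ (2 * (m + 2)! + 1 + (m + 3)!) := by ring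
      _ ≤ b ^ (2 * (m + 3)!) := Nat.pow_le_pow_right (by omega) (by omega)

end Continuant

theorem mul_factorial_le_factorial_pred_pow_three {n : ℕ} (hn : 4 ≤ n) :
    n * n ! ≤ (n - 1)! ^ 3 := by
  have hle : n ≤ (n - 1)! := by have := Nat.lt_factorial_self (n := n - 1) (by omega); omega
  rw [← Nat.mul_factorial_pred (by omega)]
  calc n * (n * (n - 1)!) ≤ (n - 1)! * ((n - 1)! * (n - 1)!) := by gcongr
    _ = (n - 1)! ^ 3 := by ring

theorem tendsto_mul_factorial_div_pow_factorial_pred {c : ℝ} (hc : 1 < c) :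
    Tendsto (fun n : ℕ => (n : ℝ) * n ! / c ^ (n - 1)!) atTop (𝓝 0) := by
  have hfac : Tendsto (fun n : ℕ => (n - 1)!) atTop atTop :=
    tendsto_atTop_mono (fun n => Nat.self_le_factorial _) (tendsto_sub_atTop_nat 1)
  refine squeeze_zero' (Eventually.of_forall fun n => by positivity) ?_
    ((tendsto_pow_const_div_const_pow_of_one_lt 3 hc).comp hfac)
  filter_upwards [eventually_ge_atTop 4] with n hn
  rw [Function.comp_apply]
  gcongr
  exact_mod_cast mul_factorial_le_factorial_pred_pow_three hn

theorem tendsto_mul_factorial_div_rpow_factorial_pred {b s : ℝ} (hb : 1 < b) (hs : 0 < s) :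
    Tendsto (fun n : ℕ => (n : ℝ) * n ! / b ^ (((n - 1)! : ℕ) / s)) atTop (𝓝 0) := by
  refine (tendsto_mul_factorial_div_pow_factorial_pred (one_lt_rpow hb (one_div_pos.2 hs))).congr
    fun n => ?_
  rw [← rpow_mul_natCast (by positivity), one_div_mul_eq_div]

theorem tendsto_factorial_div_rpow_factorial_pred {b s : ℝ} (hb : 1 < b) (hs : 0 < s) :
    Tendsto (fun n : ℕ => (n ! : ℝ) / b ^ (((n - 1)! : ℕ) / s)) atTop (𝓝 0) := by
  refine squeeze_zero' (Eventually.of_forall fun n => by positivity) ?_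
    (tendsto_mul_factorial_div_rpow_factorial_pred hb hs)
  filter_upwards [eventually_ge_atTop 1] with n hn
  gcongr
  exact le_mul_of_one_le_left (by positivity) (by exact_mod_cast hn)

theorem eventually_pow_le_exp_rpow {b : ℕ} {q : ℕ → ℕ} (hb : 1 < b)
    (hlow : ∀ n, 1 ≤ n → b ^ n ! ≤ q n) (hup : ∀ n, 1 ≤ n → q n ≤ b ^ (2 * n !))
    {s ε : ℝ} (hs : 0 < s) (hε : 0 < ε) :
    ∀ᶠ n in atTop, (q n : ℝ) ^ (n + 3) ≤ exp (ε * (q (n - 1) : ℝ) ^ (1 / s)) := by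
  have hb' : (1 : ℝ) < b := by exact_mod_cast hb
  have hlog : 0 < log b := log_pos hb'
  have hT := (tendsto_mul_factorial_div_rpow_factorial_pred hb' hs).const_mul (8 * log b)
  rw [mul_zero] at hT
  filter_upwards [hT.eventually (gt_mem_nhds hε), eventually_ge_atTop 2] with n hsmall hn
  have hpow_le : (b : ℝ) ^ (((n - 1)! : ℕ) / s) ≤ (q (n - 1) : ℝ) ^ (1 / s) := by
    rw [div_eq_mul_one_div, rpow_natCast_mul (by positivity)]
    exact rpow_le_rpow (by positivity) (by exact_mod_cast hlow (n - 1) (by omega)) (by positivity)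
  have hkey : 8 * log b * (n * n !) ≤ ε * (b : ℝ) ^ (((n - 1)! : ℕ) / s) := by
    rw [← mul_div_assoc, div_lt_iff₀ (by positivity)] at hsmall
    exact hsmall.le
  calc (q n : ℝ) ^ (n + 3) ≤ ((b : ℝ) ^ (2 * n !)) ^ (n + 3) := by
        gcongr; exact_mod_cast hup n (by omega)
    _ = exp (2 * n ! * (n + 3) * log b) := by
        rw [← pow_mul, ← rpow_natCast, rpow_def_of_pos (by positivity)]; push_cast; ring_nf
    _ ≤ exp (8 * log b * (n * n !)) := by
        gcongr exp ?_
        have : (1 : ℝ) ≤ n := by exact_mod_cast (show 1 ≤ n by omega)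
        nlinarith [(by positivity : (0 : ℝ) ≤ n ! * log b)]
    _ ≤ exp (ε * (q (n - 1) : ℝ) ^ (1 / s)) := by
        gcongr exp ?_
        exact hkey.trans (mul_le_mul_of_nonneg_left hpow_le hε.le)

/-- Growth estimate for the denominators of the convergents of
`α = [10^{1!}, 10^{2!}, 10^{3!}, …]`: for every `s ≥ 1` and `ε > 0`, eventually
`q_n^{n+3} ≤ e^{ε q_{n-1}^{1/s}}`; in particular
`n·n!/10^{(n-1)!/s} → 0` and `n!/10^{(n-1)!/s} → 0`. -/
theorem stmt_16 (q : ℕ → ℕ)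
    (hq1 : q 1 = 10 ^ (Nat.factorial 1))
    (hq2 : q 2 = 10 ^ (Nat.factorial 2) * 10 ^ (Nat.factorial 1) + 1)
    (hqrec : ∀ n, 3 ≤ n → q n = 10 ^ (Nat.factorial n) * q (n - 1) + q (n - 2)) :
    ∀ s : ℝ, 1 ≤ s →
      (∀ ε : ℝ, 0 < ε → ∃ N : ℕ, ∀ n, N ≤ n →
        ((q n : ℝ)) ^ (n + 3) ≤ Real.exp (ε * (q (n - 1) : ℝ) ^ (1 / s))) ∧
      Filter.Tendsto (fun n : ℕ => (n : ℝ) * (Nat.factorial n : ℝ) /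
        (10 : ℝ) ^ ((Nat.factorial (n - 1) : ℝ) / s)) Filter.atTop (nhds 0) ∧
      Filter.Tendsto (fun n : ℕ => (Nat.factorial n : ℝ) /
        (10 : ℝ) ^ ((Nat.factorial (n - 1) : ℝ) / s)) Filter.atTop (nhds 0) := by
  intro s hs
  have hs0 : 0 < s := by linarith
  have hlow := fun n hn => pow_factorial_le_of_continuant (by norm_num) hq1 hq2 hqrec (n := n) hn
  have hup := fun n hn =>
    le_pow_two_mul_factorial_of_continuant (by norm_num) hq1 hq2 hqrec (n := n) hn
  refine ⟨fun ε hε => ?_, tendsto_mul_factorial_div_rpow_factorial_pred (by norm_num) hs0,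
    tendsto_factorial_div_rpow_factorial_pred (by norm_num) hs0⟩
  simpa using eventually_atTop.mp (eventually_pow_le_exp_rpow (by norm_num) hlow hup hs0 hε)
end

section
/- Set a_n = 10^{n!} for n ≥ 1, and define integer sequences by p₁ = 1, q₁ = a₁, p₂ = a₂, q₂ = a₂·a₁ + 1, and p_n = a_n·p_{n−1} + p_{n−2}, q_n = a_n·q_{n−1} + q_{n−2} for n ≥ 3. Then the sequence p_n/q_n converges to a real number α; α is a Liouville number; and for every real s ≥ 1, α is not an exponential Liouville number of order s, i.e., for every ε > 0 there exists a constant C > 0 such that |q·α − p| ≥ C·e^{−ε·q^{1/s}} for all p ∈ ℤ and all integers q ≥ 1. -/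
/-!
`p n / q n` are the convergents of `α = [0; a₁, a₂, …]`. The determinant identity
`p (n+1) q n - p n q (n+1) = (-1)^n` makes them the partial sums of an alternating series with
decreasing terms `1 / (q n q (n+1))`, so they converge and
`1 / (2 q n q (n+1)) ≤ |α - p n / q n| ≤ 1 / (q n q (n+1))`.

With `aₙ = 10^{n!}` one has `10^{n!} ≤ q n ≤ 10^{3 n!}`, so `q (n+1)` beats every fixed power
of `q n`: this is the Liouville property. Conversely, if `2 q ≤ q (n+1)` then
`|q α - p| ≥ 1 / (2 q n q (n+1))`, either because `p / q = p n / q n` or because two distinct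
fractions with denominators `q` and `q n` are `1 / (q q n)` apart. Taking the least such `n`
gives `q n < 2 q`, and `log (q n q (n+1)) = O((n+1)!)` is `o(q n ^ (1/s))` because
`q n ^ (1/s) ≥ 10^{n!/s}`.
-/

open Filter Topology Real
open scoped Nat

-- Convergents of `[0; a 1, a 2, …]`, with the convergent `0 / 1` at index `0`.
def cfNum (a : ℕ → ℕ) : ℕ → ℕ
  | 0 => 0
  | 1 => 1
  | n + 2 => a (n + 2) * cfNum a (n + 1) + cfNum a n

def cfDen (a : ℕ → ℕ) : ℕ → ℕ
  | 0 => 1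
  | 1 => a 1
  | n + 2 => a (n + 2) * cfDen a (n + 1) + cfDen a n

noncomputable def cfConv (a : ℕ → ℕ) (n : ℕ) : ℝ := cfNum a n / cfDen a n

section Recurrence

variable (a : ℕ → ℕ)

lemma cfNum_add_two (n : ℕ) : cfNum a (n + 2) = a (n + 2) * cfNum a (n + 1) + cfNum a n := rfl

lemma cfDen_add_two (n : ℕ) : cfDen a (n + 2) = a (n + 2) * cfDen a (n + 1) + cfDen a n := rfl

lemma cfNum_succ_mul_cfDen_sub (n : ℕ) :
    (cfNum a (n + 1) * cfDen a n - cfNum a n * cfDen a (n + 1) : ℤ) = (-1) ^ n := by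
  induction n with
  | zero => simp [cfNum, cfDen]
  | succ n ih =>
    rw [cfNum_add_two, cfDen_add_two]
    push_cast
    linear_combination -ih

lemma eq_of_same_rec {u v : ℕ → ℕ} (h1 : u 1 = v 1) (h2 : u 2 = v 2)
    (hu : ∀ n, 3 ≤ n → u n = a n * u (n - 1) + u (n - 2))
    (hv : ∀ n, v (n + 3) = a (n + 3) * v (n + 2) + v (n + 1)) {n : ℕ} (hn : 1 ≤ n) :
    u n = v n := by
  suffices h : ∀ n, u (n + 1) = v (n + 1) ∧ u (n + 2) = v (n + 2) by
    obtain ⟨m, rfl⟩ := Nat.exists_eq_add_of_le' hn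
    exact (h m).1
  intro n
  induction n with
  | zero => exact ⟨h1, h2⟩
  | succ n ih => exact ⟨ih.2, by rw [hu (n + 3) (by omega), hv, ← ih.1, ← ih.2]; rfl⟩

end Recurrence

section Denominators

variable {a : ℕ → ℕ}

lemma le_cfDen_succ (n : ℕ) : a (n + 1) * cfDen a n ≤ cfDen a (n + 1) := by
  cases n with
  | zero => simp [cfDen]
  | succ n => exact Nat.le_add_right _ _

lemma cfDen_pos (ha : ∀ n, 0 < a (n + 1)) (n : ℕ) : 0 < cfDen a n := by
  induction n using Nat.twoStepInduction with
  | zero => exact Nat.one_pos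
  | one => exact ha 0
  | more n hn _ => exact Nat.add_pos_right _ hn

lemma cfDen_mono (ha : ∀ n, 0 < a (n + 1)) : Monotone (cfDen a) :=
  monotone_nat_of_le_succ fun n => (Nat.le_mul_of_pos_left _ (ha n)).trans (le_cfDen_succ n)

lemma cfDen_succ_le (ha : ∀ n, 0 < a (n + 1)) (n : ℕ) :
    cfDen a (n + 1) ≤ (a (n + 1) + 1) * cfDen a n := by
  cases n with
  | zero => simp [cfDen]
  | succ n =>
    rw [cfDen_add_two, add_one_mul]
    exact Nat.add_le_add_left (cfDen_mono ha n.le_succ) _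

lemma two_mul_cfDen_le (ha : ∀ n, 0 < a (n + 1)) (n : ℕ) : 2 * cfDen a n ≤ cfDen a (n + 2) := by
  rw [two_mul, cfDen_add_two]
  exact Nat.add_le_add_right
    ((cfDen_mono ha n.le_succ).trans (Nat.le_mul_of_pos_left _ (ha (n + 1)))) _

lemma self_le_cfDen (ha : ∀ n, 0 < a (n + 1)) (n : ℕ) : n ≤ cfDen a n := by
  induction n using Nat.twoStepInduction with
  | zero => exact Nat.zero_le _
  | one => exact ha 0
  | more n _ hn =>
    have : n + 1 ≤ a (n + 2) * cfDen a (n + 1) := hn.trans (Nat.le_mul_of_pos_left _ (ha _))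
    have := cfDen_pos ha n
    rw [cfDen_add_two]
    omega

lemma tendsto_cfDen (ha : ∀ n, 0 < a (n + 1)) : Tendsto (cfDen a) atTop atTop :=
  tendsto_atTop_mono (self_le_cfDen ha) tendsto_id

end Denominators

section Alternating

variable {x c : ℕ → ℝ}

lemma neg_one_pow_mul_sub_eq (hx : ∀ n, x (n + 1) - x n = (-1) ^ n * c n) (y : ℝ) (n : ℕ) :
    (-1) ^ n * (y - x n) = c n - (-1) ^ (n + 1) * (y - x (n + 1)) := by
  have hsq : ((-1 : ℝ) ^ n) ^ 2 = 1 := by rw [← pow_mul, pow_mul']; simp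
  linear_combination (-1) ^ n * hx n + c n * hsq

lemma neg_one_pow_mul_sub_mem (hx : ∀ n, x (n + 1) - x n = (-1) ^ n * c n) (hc : Antitone c)
    (hc0 : ∀ n, 0 ≤ c n) (d n : ℕ) :
    0 ≤ (-1) ^ n * (x (d + n) - x n) ∧ (-1) ^ n * (x (d + n) - x n) ≤ c n := by
  induction d generalizing n with
  | zero => simpa using hc0 n
  | succ d ih =>
    rw [neg_one_pow_mul_sub_eq hx, show d + 1 + n = d + (n + 1) by ring]
    have := hc n.le_succ
    constructor <;> linarith [ih (n + 1)]

lemma abs_sub_le_of_alternating (hx : ∀ n, x (n + 1) - x n = (-1) ^ n * c n) (hc : Antitone c)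
    (hc0 : ∀ n, 0 ≤ c n) (d n : ℕ) : |x (d + n) - x n| ≤ c n := by
  obtain ⟨h0, h1⟩ := neg_one_pow_mul_sub_mem hx hc hc0 d n
  rwa [← abs_of_nonneg h0, abs_mul, abs_neg_one_pow, one_mul] at h1

lemma cauchySeq_of_alternating (hx : ∀ n, x (n + 1) - x n = (-1) ^ n * c n) (hc : Antitone c)
    (hc0 : Tendsto c atTop (𝓝 0)) : CauchySeq x := by
  refine cauchySeq_of_le_tendsto_0 (fun N => 2 * c N) (fun n m N hn hm => ?_)
    (by simpa using hc0.const_mul 2)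
  obtain ⟨d, rfl⟩ := Nat.exists_eq_add_of_le' hn
  obtain ⟨e, rfl⟩ := Nat.exists_eq_add_of_le' hm
  have := abs_sub_le_of_alternating hx hc (hc.le_of_tendsto hc0)
  rw [Real.dist_eq]
  calc |x (d + N) - x (e + N)| ≤ |x (d + N) - x N| + |x N - x (e + N)| := abs_sub_le _ _ _
    _ ≤ 2 * c N := by rw [abs_sub_comm (x N)]; linarith [this d N, this e N]

lemma neg_one_pow_mul_limit_sub_mem (hx : ∀ n, x (n + 1) - x n = (-1) ^ n * c n)
    (hc : Antitone c) (hc0 : ∀ n, 0 ≤ c n) {α : ℝ} (hα : Tendsto x atTop (𝓝 α)) (n : ℕ) :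
    0 ≤ (-1) ^ n * (α - x n) ∧ (-1) ^ n * (α - x n) ≤ c n := by
  have hlim : Tendsto (fun d => (-1) ^ n * (x (d + n) - x n)) atTop (𝓝 ((-1) ^ n * (α - x n))) :=
    (((tendsto_add_atTop_iff_nat n).2 hα).sub_const _).const_mul _
  exact ⟨ge_of_tendsto' hlim fun d => (neg_one_pow_mul_sub_mem hx hc hc0 d n).1,
    le_of_tendsto' hlim fun d => (neg_one_pow_mul_sub_mem hx hc hc0 d n).2⟩

lemma abs_limit_sub_le_of_alternating (hx : ∀ n, x (n + 1) - x n = (-1) ^ n * c n)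
    (hc : Antitone c) (hc0 : ∀ n, 0 ≤ c n) {α : ℝ} (hα : Tendsto x atTop (𝓝 α)) (n : ℕ) :
    |α - x n| ≤ c n := by
  obtain ⟨h0, h1⟩ := neg_one_pow_mul_limit_sub_mem hx hc hc0 hα n
  rwa [← abs_of_nonneg h0, abs_mul, abs_neg_one_pow, one_mul] at h1

lemma sub_le_abs_limit_sub_of_alternating (hx : ∀ n, x (n + 1) - x n = (-1) ^ n * c n)
    (hc : Antitone c) (hc0 : ∀ n, 0 ≤ c n) {α : ℝ} (hα : Tendsto x atTop (𝓝 α)) (n : ℕ) :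
    c n - c (n + 1) ≤ |α - x n| := by
  have := (neg_one_pow_mul_limit_sub_mem hx hc hc0 hα (n + 1)).2
  calc c n - c (n + 1) ≤ (-1) ^ n * (α - x n) := by
        rw [neg_one_pow_mul_sub_eq hx]; linarith
    _ ≤ |(-1) ^ n * (α - x n)| := le_abs_self _
    _ = |α - x n| := by simp [abs_mul]

end Alternating

lemma inv_le_abs_div_sub_of_ne {m k : ℤ} {d : ℕ} (hd : 0 < d) (h : (m : ℝ) / d ≠ k) :
    (d : ℝ)⁻¹ ≤ |(m : ℝ) / d - k| := by
  have hdR : (0 : ℝ) < d := Nat.cast_pos.2 hd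
  have hmk : m - k * d ≠ 0 := by
    contrapose! h
    rw [div_eq_iff hdR.ne']
    exact_mod_cast sub_eq_zero.1 h
  have hnum : (1 : ℝ) ≤ |((m - k * d : ℤ) : ℝ)| := by exact_mod_cast Int.one_le_abs hmk
  rw [show (m : ℝ) / d - k = ((m - k * d : ℤ) : ℝ) / d by push_cast; field_simp, abs_div,
    Nat.abs_cast, inv_eq_one_div]
  exact div_le_div_of_nonneg_right hnum hdR.le

lemma exists_crossing_index {f : ℕ → ℕ} (hf : Tendsto f atTop atTop) (N m : ℕ) :
    ∃ n, N ≤ n ∧ m ≤ f (n + 1) ∧ (n = N ∨ f n < m) := by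
  classical
  have hex : ∃ n, N ≤ n ∧ m ≤ f (n + 1) :=
    ((eventually_ge_atTop N).and
      ((hf.comp (tendsto_add_atTop_nat 1)).eventually_ge_atTop m)).exists
  refine ⟨Nat.find hex, (Nat.find_spec hex).1, (Nat.find_spec hex).2, ?_⟩
  rcases (Nat.find_spec hex).1.eq_or_lt with h | h
  · exact .inl h.symm
  · refine .inr (not_le.1 fun hm => Nat.find_min hex (Nat.sub_one_lt_of_lt h) ⟨?_, ?_⟩)
    · omega
    · rwa [Nat.sub_add_cancel (Nat.one_le_of_lt h)]

section Convergents

variable {a : ℕ → ℕ}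

lemma cfConv_succ_sub (ha : ∀ n, 0 < a (n + 1)) (n : ℕ) :
    cfConv a (n + 1) - cfConv a n = (-1) ^ n * ((cfDen a n : ℝ) * cfDen a (n + 1))⁻¹ := by
  have h0 : (cfDen a n : ℝ) ≠ 0 := Nat.cast_ne_zero.2 (cfDen_pos ha n).ne'
  have h1 : (cfDen a (n + 1) : ℝ) ≠ 0 := Nat.cast_ne_zero.2 (cfDen_pos ha (n + 1)).ne'
  have hdet : (cfNum a (n + 1) * cfDen a n - cfNum a n * cfDen a (n + 1) : ℝ) = (-1) ^ n := by
    exact_mod_cast cfNum_succ_mul_cfDen_sub a n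
  rw [cfConv, cfConv]
  field_simp
  linear_combination hdet

lemma antitone_cfDen_mul_inv (ha : ∀ n, 0 < a (n + 1)) :
    Antitone fun n => ((cfDen a n : ℝ) * cfDen a (n + 1))⁻¹ := by
  intro m n hmn
  have := cfDen_pos ha m
  have := cfDen_pos ha (m + 1)
  have := cfDen_mono ha hmn
  have := cfDen_mono ha (Nat.succ_le_succ hmn)
  dsimp only
  gcongr

lemma tendsto_cfDen_mul_inv (ha : ∀ n, 0 < a (n + 1)) :
    Tendsto (fun n => ((cfDen a n : ℝ) * cfDen a (n + 1))⁻¹) atTop (𝓝 0) := by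
  have h := (tendsto_natCast_atTop_atTop (R := ℝ)).comp (tendsto_cfDen ha)
  exact tendsto_inv_atTop_zero.comp (h.atTop_mul_atTop₀ (h.comp (tendsto_add_atTop_nat 1)))

lemma exists_tendsto_cfConv (ha : ∀ n, 0 < a (n + 1)) : ∃ α, Tendsto (cfConv a) atTop (𝓝 α) :=
  cauchySeq_tendsto_of_complete
    (cauchySeq_of_alternating (cfConv_succ_sub ha) (antitone_cfDen_mul_inv ha)
      (tendsto_cfDen_mul_inv ha))

variable {α : ℝ}

lemma abs_sub_cfConv_le (ha : ∀ n, 0 < a (n + 1)) (hα : Tendsto (cfConv a) atTop (𝓝 α))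
    (n : ℕ) : |α - cfConv a n| ≤ ((cfDen a n : ℝ) * cfDen a (n + 1))⁻¹ :=
  abs_limit_sub_le_of_alternating (cfConv_succ_sub ha) (antitone_cfDen_mul_inv ha)
    (fun n => by positivity) hα n

lemma inv_two_mul_le_abs_sub_cfConv (ha : ∀ n, 0 < a (n + 1))
    (hα : Tendsto (cfConv a) atTop (𝓝 α)) (n : ℕ) :
    (2 * cfDen a n * cfDen a (n + 1) : ℝ)⁻¹ ≤ |α - cfConv a n| := by
  have h := sub_le_abs_limit_sub_of_alternating (cfConv_succ_sub ha) (antitone_cfDen_mul_inv ha)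
    (fun n => by positivity) hα n
  have h0 : (0 : ℝ) < cfDen a n := Nat.cast_pos.2 (cfDen_pos ha n)
  have h1 : (0 : ℝ) < cfDen a (n + 1) := Nat.cast_pos.2 (cfDen_pos ha (n + 1))
  have h2 : (2 * cfDen a n : ℝ) ≤ cfDen a (n + 2) := by exact_mod_cast two_mul_cfDen_le ha n
  have hnext :
      ((cfDen a (n + 1) : ℝ) * cfDen a (n + 2))⁻¹ ≤ (2 * cfDen a n * cfDen a (n + 1) : ℝ)⁻¹ := by
    rw [mul_comm (cfDen a (n + 1) : ℝ)]
    gcongr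
  calc (2 * cfDen a n * cfDen a (n + 1) : ℝ)⁻¹
      = ((cfDen a n : ℝ) * cfDen a (n + 1))⁻¹ - (2 * cfDen a n * cfDen a (n + 1) : ℝ)⁻¹ := by
        field_simp; ring
    _ ≤ |α - cfConv a n| := by linarith

lemma inv_two_mul_le_abs_mul_sub (ha : ∀ n, 0 < a (n + 1))
    (hα : Tendsto (cfConv a) atTop (𝓝 α)) {n qq : ℕ} (pp : ℤ) (hqq : 1 ≤ qq)
    (hn : 2 * qq ≤ cfDen a (n + 1)) :
    (2 * cfDen a n * cfDen a (n + 1) : ℝ)⁻¹ ≤ |qq * α - pp| := by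
  have h0 : (0 : ℝ) < cfDen a n := Nat.cast_pos.2 (cfDen_pos ha n)
  have h1 : (1 : ℝ) ≤ cfDen a (n + 1) := Nat.one_le_cast.2 (cfDen_pos ha (n + 1))
  have hqqR : (1 : ℝ) ≤ qq := Nat.one_le_cast.2 hqq
  by_cases hx : (qq : ℝ) * cfConv a n = pp
  · calc (2 * cfDen a n * cfDen a (n + 1) : ℝ)⁻¹ ≤ |α - cfConv a n| :=
          inv_two_mul_le_abs_sub_cfConv ha hα n
      _ ≤ qq * |α - cfConv a n| := le_mul_of_one_le_left (abs_nonneg _) hqqR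
      _ = |qq * α - pp| := by
          rw [← hx, ← mul_sub, abs_mul, Nat.abs_cast]
  · have hconv : (qq : ℝ) * cfConv a n = ((qq * cfNum a n : ℤ) : ℝ) / cfDen a n := by
      push_cast; rw [cfConv, mul_div_assoc]
    have hfar : (cfDen a n : ℝ)⁻¹ ≤ |qq * cfConv a n - pp| := by
      rw [hconv] at hx ⊢
      exact inv_le_abs_div_sub_of_ne (cfDen_pos ha n) hx
    have hnR : 2 * (qq : ℝ) ≤ cfDen a (n + 1) := by exact_mod_cast hn
    have hnear : qq * |α - cfConv a n| ≤ (2 * cfDen a n : ℝ)⁻¹ :=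
      calc qq * |α - cfConv a n| ≤ qq * ((cfDen a n : ℝ) * cfDen a (n + 1))⁻¹ := by
            gcongr; exact abs_sub_cfConv_le ha hα n
        _ ≤ cfDen a (n + 1) / 2 * ((cfDen a n : ℝ) * cfDen a (n + 1))⁻¹ := by
            gcongr; linarith
        _ = (2 * cfDen a n : ℝ)⁻¹ := by field_simp
    have htri : |qq * cfConv a n - pp| ≤ |qq * α - pp| + qq * |α - cfConv a n| := by
      calc |qq * cfConv a n - pp| = |(qq * α - pp) - qq * (α - cfConv a n)| := by ring_nf
        _ ≤ |qq * α - pp| + |qq * (α - cfConv a n)| := abs_sub _ _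
        _ = |qq * α - pp| + qq * |α - cfConv a n| := by
            rw [abs_mul, Nat.abs_cast]
    calc (2 * cfDen a n * cfDen a (n + 1) : ℝ)⁻¹ ≤ (2 * cfDen a n : ℝ)⁻¹ :=
          inv_anti₀ (by positivity) (le_mul_of_one_le_right (by positivity) h1)
      _ = (cfDen a n : ℝ)⁻¹ - (2 * cfDen a n : ℝ)⁻¹ := by field_simp; ring
      _ ≤ |qq * α - pp| := by linarith

lemma liouville_of_cfDen_pow_lt (ha : ∀ n, 0 < a (n + 1)) (hα : Tendsto (cfConv a) atTop (𝓝 α))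
    (h : ∀ m : ℕ, ∃ n, 1 < cfDen a n ∧ cfDen a n ^ m < cfDen a (n + 1)) : Liouville α := by
  intro m
  obtain ⟨n, hn1, hlt⟩ := h m
  have hconv : ((cfNum a n : ℤ) : ℝ) / ((cfDen a n : ℤ) : ℝ) = cfConv a n := by
    push_cast; rfl
  refine ⟨cfNum a n, cfDen a n, by exact_mod_cast hn1, ?_, ?_⟩
  · rw [hconv, ← sub_ne_zero, ← abs_pos]
    exact lt_of_lt_of_le (by have := cfDen_pos ha (n + 1); positivity)
      (inv_two_mul_le_abs_sub_cfConv ha hα n)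
  · have hltR : (cfDen a n : ℝ) ^ m < cfDen a n * cfDen a (n + 1) := by
      exact_mod_cast hlt.trans_le (Nat.le_mul_of_pos_left _ (cfDen_pos ha n))
    rw [hconv, Int.cast_natCast, one_div]
    calc |α - cfConv a n| ≤ ((cfDen a n : ℝ) * cfDen a (n + 1))⁻¹ := abs_sub_cfConv_le ha hα n
      _ < ((cfDen a n : ℝ) ^ m)⁻¹ := by
          have := cfDen_pos ha n
          gcongr

lemma exists_pos_mul_exp_le_abs_mul_sub (ha : ∀ n, 0 < a (n + 1))
    (hα : Tendsto (cfConv a) atTop (𝓝 α)) {t : ℝ} (ht : 0 ≤ t)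
    (h : ∀ δ > 0, ∀ᶠ n in atTop,
      (2 * cfDen a n * cfDen a (n + 1) : ℝ) ≤ exp (δ * (cfDen a n : ℝ) ^ t))
    {ε : ℝ} (hε : 0 < ε) :
    ∃ C > 0, ∀ (pp : ℤ) (qq : ℕ), 1 ≤ qq → C * exp (-ε * (qq : ℝ) ^ t) ≤ |qq * α - pp| := by
  -- Past `N`, the crossing index gives `q n < 2 qq`, which turns the rate `ε / 2 ^ t` at `q n`
  -- into the rate `ε` at `qq`.
  obtain ⟨N, hN⟩ := eventually_atTop.1 (h (ε / 2 ^ t) (by positivity))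
  have hpos : ∀ n, (0 : ℝ) < 2 * cfDen a n * cfDen a (n + 1) := fun n => by
    have := cfDen_pos ha n; have := cfDen_pos ha (n + 1); positivity
  refine ⟨(2 * cfDen a N * cfDen a (N + 1) : ℝ)⁻¹, inv_pos.2 (hpos N), fun pp qq hqq => ?_⟩
  have hexp : exp (-ε * (qq : ℝ) ^ t) ≤ 1 :=
    exp_le_one_iff.2 (mul_nonpos_of_nonpos_of_nonneg (by linarith) (by positivity))
  obtain ⟨n, hNn, hn, hn' | hlt⟩ := exists_crossing_index (tendsto_cfDen ha) N (2 * qq)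
  · subst hn'
    exact (mul_le_of_le_one_right (inv_pos.2 (hpos n)).le hexp).trans
      (inv_two_mul_le_abs_mul_sub ha hα pp hqq hn)
  · have hC : (2 * cfDen a N * cfDen a (N + 1) : ℝ)⁻¹ ≤ 1 := by
      have := cfDen_pos ha N; have := cfDen_pos ha (N + 1)
      exact inv_le_one_of_one_le₀ (by norm_cast; nlinarith)
    have hrpow : (cfDen a n : ℝ) ^ t ≤ 2 ^ t * (qq : ℝ) ^ t := by
      rw [← Real.mul_rpow (by norm_num) (Nat.cast_nonneg _)]
      gcongr
      exact_mod_cast hlt.le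
    calc (2 * cfDen a N * cfDen a (N + 1) : ℝ)⁻¹ * exp (-ε * (qq : ℝ) ^ t)
        ≤ exp (-(ε / 2 ^ t * (cfDen a n : ℝ) ^ t)) := by
          refine (mul_le_of_le_one_left (exp_pos _).le hC).trans (exp_le_exp.2 ?_)
          rw [div_mul_eq_mul_div, neg_mul, neg_le_neg_iff,
            div_le_iff₀ (by positivity)]
          linarith [mul_le_mul_of_nonneg_left hrpow hε.le]
      _ ≤ (2 * cfDen a n * cfDen a (n + 1) : ℝ)⁻¹ := by
          rw [exp_neg]
          exact inv_anti₀ (hpos n) (hN n hNn)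
      _ ≤ |qq * α - pp| := inv_two_mul_le_abs_mul_sub ha hα pp hqq hn

end Convergents

section FactorialExponents

variable {a : ℕ → ℕ}

lemma pos_of_eq_ten_pow (ha : ∀ n, a n = 10 ^ n !) (n : ℕ) : 0 < a (n + 1) := by
  rw [ha]; positivity

lemma ten_pow_factorial_le_cfDen (ha : ∀ n, a n = 10 ^ n !) (n : ℕ) :
    10 ^ (n + 1)! ≤ cfDen a (n + 1) := by
  rw [← ha]
  exact (Nat.le_mul_of_pos_right _ (cfDen_pos (pos_of_eq_ten_pow ha) n)).trans (le_cfDen_succ n)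

lemma cfDen_le_ten_pow_factorial (ha : ∀ n, a n = 10 ^ n !) (n : ℕ) :
    cfDen a (n + 1) ≤ 10 ^ (3 * (n + 1)!) := by
  induction n with
  | zero => simp [cfDen, ha]
  | succ n ih =>
    have hstep : (n + 2)! + 1 + 3 * (n + 1)! ≤ 3 * (n + 2)! := by
      have := Nat.factorial_pos (n + 1)
      rw [Nat.factorial_succ (n + 1)]
      nlinarith
    calc cfDen a (n + 2) ≤ (10 ^ (n + 2)! + 1) * cfDen a (n + 1) := by
          rw [← ha]; exact cfDen_succ_le (pos_of_eq_ten_pow ha) (n + 1)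
      _ ≤ 10 ^ ((n + 2)! + 1) * 10 ^ (3 * (n + 1)!) := by
          gcongr
          rw [pow_succ]
          have := Nat.one_le_pow ((n + 2)!) 10 (by norm_num)
          omega
      _ ≤ 10 ^ (3 * (n + 2)!) := by
          rw [← pow_add]
          exact Nat.pow_le_pow_right (by norm_num) hstep

lemma exists_cfDen_pow_lt (ha : ∀ n, a n = 10 ^ n !) (m : ℕ) :
    ∃ n, 1 < cfDen a n ∧ cfDen a n ^ m < cfDen a (n + 1) := by
  refine ⟨3 * m + 1, ?_, ?_⟩
  · calc 1 < 10 ^ (3 * m + 1)! := Nat.one_lt_pow (Nat.factorial_ne_zero _) (by norm_num)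
      _ ≤ cfDen a (3 * m + 1) := ten_pow_factorial_le_cfDen ha _
  · have hexp : 3 * (3 * m + 1)! * m < (3 * m + 2)! := by
      rw [Nat.factorial_succ (3 * m + 1)]
      have := Nat.factorial_pos (3 * m + 1)
      nlinarith
    calc cfDen a (3 * m + 1) ^ m ≤ (10 ^ (3 * (3 * m + 1)!)) ^ m :=
          Nat.pow_le_pow_left (cfDen_le_ten_pow_factorial ha _) m
      _ < 10 ^ (3 * m + 2)! := by
          rw [← pow_mul]; exact Nat.pow_lt_pow_right (by norm_num) hexp
      _ ≤ cfDen a (3 * m + 2) := ten_pow_factorial_le_cfDen ha _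

lemma two_mul_cfDen_mul_le (ha : ∀ n, a n = 10 ^ n !) (n : ℕ) :
    2 * cfDen a (n + 1) * cfDen a (n + 2) ≤ 10 ^ (7 * (n + 2)!) := by
  have h2 : 2 ≤ 10 ^ (n + 2)! := (Nat.le_self_pow (Nat.factorial_ne_zero _) 10).trans' (by norm_num)
  have h1 : cfDen a (n + 1) ≤ 10 ^ (3 * (n + 2)!) :=
    (cfDen_le_ten_pow_factorial ha n).trans
      (Nat.pow_le_pow_right (by norm_num) (Nat.mul_le_mul_left 3 (Nat.factorial_le (by omega))))
  calc 2 * cfDen a (n + 1) * cfDen a (n + 2)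
      ≤ 10 ^ (n + 2)! * 10 ^ (3 * (n + 2)!) * 10 ^ (3 * (n + 2)!) := by
        gcongr; exact cfDen_le_ten_pow_factorial ha (n + 1)
    _ = 10 ^ (7 * (n + 2)!) := by rw [← pow_add, ← pow_add]; ring_nf

lemma eventually_two_mul_cfDen_mul_le_exp (ha : ∀ n, a n = 10 ^ n !) {t δ : ℝ} (ht : 0 < t)
    (hδ : 0 < δ) : ∀ᶠ n in atTop,
      (2 * cfDen a n * cfDen a (n + 1) : ℝ) ≤ exp (δ * (cfDen a n : ℝ) ^ t) := by
  have hb : 1 < (10 : ℝ) ^ t := one_lt_rpow (by norm_num) ht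
  have hsq : ∀ᶠ m : ℕ in atTop, 7 * log 10 * (m : ℝ) ^ 2 ≤ δ * ((10 : ℝ) ^ t) ^ m := by
    filter_upwards [(isLittleO_pow_const_const_pow_of_one_lt (R := ℝ) 2 hb).def
      (div_pos hδ (by positivity : (0 : ℝ) < 7 * log 10))] with m hm
    rw [Real.norm_of_nonneg (by positivity), Real.norm_of_nonneg (by positivity)] at hm
    rwa [div_mul_eq_mul_div, le_div_iff₀ (by positivity), mul_comm] at hm
  filter_upwards [eventually_ge_atTop 3, factorial_tendsto_atTop.eventually hsq] with n hn hm
  obtain ⟨k, rfl⟩ := Nat.exists_eq_add_of_le' (hn.trans' (by norm_num) : 1 ≤ n)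
  have hfac : ((k + 2)! : ℝ) ≤ ((k + 1)! : ℝ) ^ 2 := by
    have := Nat.self_le_factorial k
    have : (k + 2)! ≤ (k + 1)! ^ 2 := by
      rw [sq, Nat.factorial_succ (k + 1), Nat.factorial_succ k]
      gcongr
      nlinarith
    exact_mod_cast this
  have hden : ((10 : ℝ) ^ t) ^ (k + 1)! ≤ (cfDen a (k + 1) : ℝ) ^ t := by
    rw [rpow_pow_comm (by norm_num)]
    gcongr
    exact_mod_cast ten_pow_factorial_le_cfDen ha k
  calc (2 * cfDen a (k + 1) * cfDen a (k + 1 + 1) : ℝ) ≤ (10 : ℝ) ^ (7 * (k + 2)!) := by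
        exact_mod_cast two_mul_cfDen_mul_le ha k
    _ = exp (7 * log 10 * (k + 2)!) := by
        conv_lhs => rw [← exp_log (by norm_num : (0 : ℝ) < 10), ← exp_nat_mul]
        push_cast
        ring_nf
    _ ≤ exp (δ * (cfDen a (k + 1) : ℝ) ^ t) := by
        refine exp_le_exp.2 ?_
        calc 7 * log 10 * ((k + 2)! : ℝ) ≤ 7 * log 10 * ((k + 1)! : ℝ) ^ 2 := by gcongr
          _ ≤ δ * ((10 : ℝ) ^ t) ^ (k + 1)! := hm
          _ ≤ δ * (cfDen a (k + 1) : ℝ) ^ t := by gcongr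

end FactorialExponents

/-- Proposition 6.2: the continued fraction `α = [10^{1!}, 10^{2!}, 10^{3!}, …]` (the
limit of its convergents `p_n/q_n`) is a Liouville number, but for every `s ≥ 1` it is
not an exponential Liouville number of order `s`: for every `ε > 0` there is `C > 0`
with `|qα - p| ≥ C e^{-ε q^{1/s}}` for all `p ∈ ℤ` and all integers `q ≥ 1`. -/
theorem stmt_17 (a p q : ℕ → ℕ)
    (ha : ∀ n, a n = 10 ^ (Nat.factorial n))
    (hp1 : p 1 = 1) (hq1 : q 1 = a 1)
    (hp2 : p 2 = a 2) (hq2 : q 2 = a 2 * a 1 + 1)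
    (hprec : ∀ n, 3 ≤ n → p n = a n * p (n - 1) + p (n - 2))
    (hqrec : ∀ n, 3 ≤ n → q n = a n * q (n - 1) + q (n - 2)) :
    ∃ α : ℝ,
      Filter.Tendsto (fun n : ℕ => (p n : ℝ) / (q n : ℝ)) Filter.atTop (nhds α) ∧
      Liouville α ∧
      ∀ s : ℝ, 1 ≤ s → ∀ ε : ℝ, 0 < ε → ∃ C : ℝ, 0 < C ∧
        ∀ (pp : ℤ) (qq : ℕ), 1 ≤ qq →
          C * Real.exp (-ε * (qq : ℝ) ^ (1 / s)) ≤ |(qq : ℝ) * α - (pp : ℝ)| := by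
  have hpos := pos_of_eq_ten_pow ha
  have hp : ∀ n, 1 ≤ n → p n = cfNum a n := fun n =>
    eq_of_same_rec (v := cfNum a) a hp1 (by simp [hp2, cfNum]) hprec
      (fun n => cfNum_add_two a (n + 1))
  have hq : ∀ n, 1 ≤ n → q n = cfDen a n := fun n =>
    eq_of_same_rec (v := cfDen a) a hq1 hq2 hqrec (fun n => cfDen_add_two a (n + 1))
  obtain ⟨α, hα⟩ := exists_tendsto_cfConv hpos
  refine ⟨α, hα.congr' ?_, liouville_of_cfDen_pow_lt hpos hα (exists_cfDen_pow_lt ha),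
    fun s hs ε hε => ?_⟩
  · filter_upwards [eventually_ge_atTop 1] with n hn
    rw [cfConv, hp n hn, hq n hn]
  · have ht : 0 < 1 / s := one_div_pos.2 (zero_lt_one.trans_le hs)
    exact exists_pos_mul_exp_le_abs_mul_sub hpos hα ht.le
      (fun δ hδ => eventually_two_mul_cfDen_mul_le_exp ha ht hδ) hε
end
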